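/- arXiv:1406.0168 — 6 statements merged into one kernel-verified Lean document; each statement's English description precedes it below -/
import Mathlib

section
/- Let d_x, d_p ≥ 1 be integers and C₀ > 0. Let g : ℝ^{d_x} × ℝ^{d_p} → [0,∞) be measurable with g(x,p) ≤ C₀ for almost every (x,p). Let 1 ≤ q < ∞ and let M, S be real numbers with M ≥ S > -d_p. Then there is a constant C > 0, depending only on C₀, S, M and d_p, such that ‖p_0^S g‖_{L^q_x L^1_p} ≤ C ‖p_0^M g‖_{L^{q(S+d_p)/(M+d_p)}_x L^1_p}^{(S+d_p)/(M+d_p)}. -/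
open MeasureTheory

open Metric
open scoped ENNReal NNReal

noncomputable section

local notation "p₀" => fun {n : ℕ} (p : EuclideanSpace ℝ (Fin n)) => Real.sqrt (1 + ‖p‖ ^ 2)

lemma one_le_p0 {n : ℕ} (p : EuclideanSpace ℝ (Fin n)) : 1 ≤ Real.sqrt (1 + ‖p‖ ^ 2) := by
  exact Real.le_sqrt_of_sq_le (by nlinarith [sq_nonneg ‖p‖])

lemma norm_le_p0 {n : ℕ} (p : EuclideanSpace ℝ (Fin n)) : ‖p‖ ≤ Real.sqrt (1 + ‖p‖ ^ 2) := by
  exact Real.le_sqrt_of_sq_le (by linarith)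

lemma lemmaA (n : ℕ) (hn : 1 ≤ n) (S : ℝ) (hS : -(n:ℝ) < S) :
    ∃ c : ℝ, 0 < c ∧ ∀ R : ℝ, 1 ≤ R →
      ∫⁻ p in {p : EuclideanSpace ℝ (Fin n) | Real.sqrt (1 + ‖p‖ ^ 2) ≤ R},
        ENNReal.ofReal (Real.sqrt (1 + ‖p‖ ^ 2) ^ S) ≤ ENNReal.ofReal (c * R ^ (S + n)) := by
  set E := EuclideanSpace ℝ (Fin n) with hE
  set V : ℝ≥0∞ := volume (ball (0:E) 1) with hV
  have hVfin : V ≠ ⊤ := measure_ball_lt_top.ne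
  have hVr : 0 ≤ V.toReal := ENNReal.toReal_nonneg
  rcases le_or_gt 0 S with hS0 | hS0
  · -- S ≥ 0
    refine ⟨V.toReal + 1, by positivity, fun R hR => ?_⟩
    have hR0 : (0:ℝ) < R := lt_of_lt_of_le one_pos hR
    calc ∫⁻ p in {p : E | Real.sqrt (1 + ‖p‖ ^ 2) ≤ R},
          ENNReal.ofReal (Real.sqrt (1 + ‖p‖ ^ 2) ^ S)
        ≤ ∫⁻ _ in {p : E | Real.sqrt (1 + ‖p‖ ^ 2) ≤ R}, ENNReal.ofReal (R ^ S) := by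
          refine setLIntegral_mono' ?_ fun p hp => ?_
          · exact measurableSet_le (by fun_prop) measurable_const
          · exact ENNReal.ofReal_le_ofReal <|
              Real.rpow_le_rpow (Real.sqrt_nonneg _) hp hS0
      _ = ENNReal.ofReal (R ^ S) * volume {p : E | Real.sqrt (1 + ‖p‖ ^ 2) ≤ R} :=
          setLIntegral_const _ _
      _ ≤ ENNReal.ofReal (R ^ S) * volume (closedBall (0:E) R) := by
          gcongr
          intro p hp
          exact mem_closedBall_zero_iff.2 ((norm_le_p0 p).trans hp)
      _ = ENNReal.ofReal (R ^ S) * (ENNReal.ofReal (R ^ n) * ENNReal.ofReal V.toReal) := by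
          rw [ENNReal.ofReal_toReal hVfin, Measure.addHaar_closedBall _ _ hR0.le,
            finrank_euclideanSpace_fin]
      _ ≤ ENNReal.ofReal ((V.toReal + 1) * R ^ (S + n)) := by
          rw [← ENNReal.ofReal_mul (by positivity), ← ENNReal.ofReal_mul (by positivity)]
          refine ENNReal.ofReal_le_ofReal ?_
          rw [Real.rpow_add hR0, Real.rpow_natCast]
          nlinarith [Real.rpow_nonneg hR0.le S, pow_nonneg hR0.le n,
            mul_pos (Real.rpow_pos_of_pos hR0 S) (pow_pos hR0 n)]
  · -- S < 0
    have hn0 : (0:ℝ) < n := by exact_mod_cast hn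
    have hSn : (0:ℝ) < S + n := by linarith
    set q : ℝ := (2:ℝ) ^ (-(S + (n:ℝ))) with hqdef
    have hq0 : (0:ℝ) < q := Real.rpow_pos_of_pos two_pos _
    have hq1 : q < 1 := Real.rpow_lt_one_of_one_lt_of_neg one_lt_two (by linarith)
    set T : ℝ≥0∞ := (1 - ENNReal.ofReal q)⁻¹ with hT
    have hT_ne : T ≠ ⊤ := by
      rw [hT, Ne, ENNReal.inv_eq_top, tsub_eq_zero_iff_le]
      exact fun h => absurd (ENNReal.one_le_ofReal.1 h) (not_le.2 hq1)
    set K : ℝ≥0∞ := ENNReal.ofReal ((2:ℝ) ^ (-S)) * V * T with hK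
    have hK_ne : K ≠ ⊤ := ENNReal.mul_ne_top (ENNReal.mul_ne_top ENNReal.ofReal_ne_top hVfin) hT_ne
    refine ⟨K.toReal + 1, by positivity, fun R hR => ?_⟩
    have hR0 : (0:ℝ) < R := lt_of_lt_of_le one_pos hR
    set A : ℕ → Set E := fun k =>
      closedBall (0:E) (R * 2 ^ (-(k:ℝ))) \ closedBall (0:E) (R * 2 ^ (-(k:ℝ) - 1)) with hA
    have hpow : ∀ m : ℕ, (2:ℝ) ^ (-(m:ℝ)) = ((2:ℝ)⁻¹) ^ m := fun m => by
      rw [Real.rpow_neg (by norm_num), Real.rpow_natCast, inv_pow]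
    have cover : {p : E | Real.sqrt (1 + ‖p‖ ^ 2) ≤ R} ⊆ {0} ∪ ⋃ k : ℕ, A k := by
      intro p hp
      rcases eq_or_ne p 0 with hp0 | hp0
      · exact Or.inl (by simp [hp0])
      refine Or.inr (Set.mem_iUnion.2 ?_)
      have hpR : ‖p‖ ≤ R := (norm_le_p0 p).trans hp
      have hpn : (0:ℝ) < ‖p‖ := norm_pos_iff.2 hp0
      have hex : ∃ k : ℕ, (2:ℝ) ^ (-(k:ℝ)) < ‖p‖ / R := by
        obtain ⟨k, hk⟩ := exists_pow_lt_of_lt_one (div_pos hpn hR0) (by norm_num : (2:ℝ)⁻¹ < 1)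
        exact ⟨k, by rw [hpow]; exact hk⟩
      have hN1 : 1 ≤ Nat.find hex := by
        rw [Nat.one_le_iff_ne_zero]
        intro h0
        have := Nat.find_spec hex
        rw [h0] at this
        simp only [Nat.cast_zero, neg_zero, Real.rpow_zero] at this
        exact absurd (div_le_one_of_le₀ hpR hR0.le) (not_le.2 this)
      set k := Nat.find hex - 1 with hkdef
      have hk1 : k + 1 = Nat.find hex := by omega
      have hlt : (2:ℝ) ^ (-(k:ℝ) - 1) < ‖p‖ / R := by
        have := Nat.find_spec hex
        rw [← hk1] at this
        convert this using 2
        push_cast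
        ring
      have hge : ‖p‖ / R ≤ (2:ℝ) ^ (-(k:ℝ)) :=
        not_lt.1 (Nat.find_min hex (by omega))
      refine ⟨k, ?_, ?_⟩
      · rw [mem_closedBall_zero_iff]
        calc ‖p‖ = (‖p‖ / R) * R := by field_simp
          _ ≤ (2:ℝ) ^ (-(k:ℝ)) * R := by gcongr
          _ = R * 2 ^ (-(k:ℝ)) := mul_comm _ _
      · rw [mem_closedBall_zero_iff, not_le]
        calc R * 2 ^ (-(k:ℝ) - 1) < R * (‖p‖ / R) := by gcongr
          _ = ‖p‖ := by field_simp
    have hsing : volume ({(0:E)} : Set E) = 0 := by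
      have : ({(0:E)} : Set E) = closedBall (0:E) 0 := closedBall_zero.symm
      rw [this, Measure.addHaar_closedBall _ _ le_rfl, finrank_euclideanSpace_fin,
        zero_pow (by omega : n ≠ 0)]
      simp
    have hterm : ∀ k : ℕ, ∫⁻ p in A k, ENNReal.ofReal (Real.sqrt (1 + ‖p‖ ^ 2) ^ S)
        ≤ ENNReal.ofReal (R ^ (S + (n:ℝ)) * 2 ^ (-S) * q ^ k) * V := by
      intro k
      have hr1 : (0:ℝ) < R * 2 ^ (-(k:ℝ) - 1) := by positivity
      have hAm : MeasurableSet (A k) :=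
        (measurableSet_closedBall).diff measurableSet_closedBall
      calc ∫⁻ p in A k, ENNReal.ofReal (Real.sqrt (1 + ‖p‖ ^ 2) ^ S)
          ≤ ∫⁻ _ in A k, ENNReal.ofReal ((R * 2 ^ (-(k:ℝ) - 1)) ^ S) := by
            refine setLIntegral_mono' hAm fun p hp => ENNReal.ofReal_le_ofReal ?_
            have hnp : R * 2 ^ (-(k:ℝ) - 1) < Real.sqrt (1 + ‖p‖ ^ 2) := by
              have := hp.2
              rw [mem_closedBall_zero_iff, not_le] at this
              exact this.trans_le (norm_le_p0 p)
            exact Real.rpow_le_rpow_of_nonpos hr1 hnp.le hS0.le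
        _ = ENNReal.ofReal ((R * 2 ^ (-(k:ℝ) - 1)) ^ S) * volume (A k) :=
            setLIntegral_const _ _
        _ ≤ ENNReal.ofReal ((R * 2 ^ (-(k:ℝ) - 1)) ^ S)
              * volume (closedBall (0:E) (R * 2 ^ (-(k:ℝ)))) := by
            gcongr
            exact Set.diff_subset
        _ = ENNReal.ofReal ((R * 2 ^ (-(k:ℝ) - 1)) ^ S)
              * (ENNReal.ofReal ((R * 2 ^ (-(k:ℝ))) ^ (n:ℝ)) * V) := by
            rw [Measure.addHaar_closedBall _ _ (by positivity), finrank_euclideanSpace_fin,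
              ← Real.rpow_natCast (R * 2 ^ (-(k:ℝ))) n]
        _ = ENNReal.ofReal (R ^ (S + (n:ℝ)) * 2 ^ (-S) * q ^ k) * V := by
            rw [← mul_assoc, ← ENNReal.ofReal_mul (by positivity)]
            congr 1
            have h2 : (2:ℝ) ^ ((-(k:ℝ) - 1) * S) * 2 ^ ((-(k:ℝ)) * n)
                = 2 ^ (-S) * q ^ k := by
              rw [hqdef, ← Real.rpow_natCast ((2:ℝ) ^ (-(S + (n:ℝ)))) k,
                ← Real.rpow_mul (by norm_num : (0:ℝ) ≤ 2),
                ← Real.rpow_add two_pos, ← Real.rpow_add two_pos]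
              ring_nf
            rw [Real.mul_rpow hR0.le (Real.rpow_nonneg (by norm_num) _),
              Real.mul_rpow hR0.le (Real.rpow_nonneg (by norm_num) _),
              ← Real.rpow_mul (by norm_num : (0:ℝ) ≤ 2),
              ← Real.rpow_mul (by norm_num : (0:ℝ) ≤ 2),
              Real.rpow_add hR0]
            congr 1
            calc R ^ S * 2 ^ ((-(k:ℝ) - 1) * S) * (R ^ (n:ℝ) * 2 ^ ((-(k:ℝ)) * n))
                = R ^ S * R ^ (n:ℝ) * (2 ^ ((-(k:ℝ) - 1) * S) * 2 ^ ((-(k:ℝ)) * n)) := by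
                  ring
              _ = R ^ S * R ^ (n:ℝ) * (2 ^ (-S) * q ^ k) := by rw [h2]
              _ = R ^ S * R ^ (n:ℝ) * 2 ^ (-S) * q ^ k := by ring
    calc ∫⁻ p in {p : E | Real.sqrt (1 + ‖p‖ ^ 2) ≤ R},
          ENNReal.ofReal (Real.sqrt (1 + ‖p‖ ^ 2) ^ S)
        ≤ ∫⁻ p in ({0} ∪ ⋃ k : ℕ, A k : Set E),
            ENNReal.ofReal (Real.sqrt (1 + ‖p‖ ^ 2) ^ S) := lintegral_mono_set cover
      _ ≤ (∫⁻ p in ({(0:E)} : Set E), ENNReal.ofReal (Real.sqrt (1 + ‖p‖ ^ 2) ^ S))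
            + ∫⁻ p in (⋃ k : ℕ, A k), ENNReal.ofReal (Real.sqrt (1 + ‖p‖ ^ 2) ^ S) :=
          lintegral_union_le _ _ _
      _ ≤ 0 + ∑' k : ℕ, ∫⁻ p in A k, ENNReal.ofReal (Real.sqrt (1 + ‖p‖ ^ 2) ^ S) :=
          add_le_add (le_of_eq (setLIntegral_measure_zero _ _ hsing))
            (lintegral_iUnion_le _ _)
      _ ≤ ∑' k : ℕ, ENNReal.ofReal (R ^ (S + (n:ℝ)) * 2 ^ (-S) * q ^ k) * V := by
          rw [zero_add]
          exact ENNReal.tsum_le_tsum hterm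
      _ = ENNReal.ofReal (R ^ (S + (n:ℝ))) * K := by
          have h1 : ∀ k : ℕ, ENNReal.ofReal (R ^ (S + (n:ℝ)) * 2 ^ (-S) * q ^ k) * V
              = (ENNReal.ofReal (R ^ (S + (n:ℝ))) * ENNReal.ofReal ((2:ℝ) ^ (-S)) * V)
                * ENNReal.ofReal q ^ k := by
            intro k
            rw [ENNReal.ofReal_mul (by positivity), ENNReal.ofReal_mul (by positivity),
              ENNReal.ofReal_pow hq0.le]
            ring
          simp_rw [h1]
          rw [ENNReal.tsum_mul_left, ENNReal.tsum_geometric, hK, hT]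
          ring
      _ = ENNReal.ofReal (R ^ (S + (n:ℝ)) * K.toReal) := by
          rw [ENNReal.ofReal_mul (by positivity), ENNReal.ofReal_toReal hK_ne]
      _ ≤ ENNReal.ofReal ((K.toReal + 1) * R ^ (S + (n:ℝ))) := by
          refine ENNReal.ofReal_le_ofReal ?_
          have h2 : (0:ℝ) ≤ R ^ (S + (n:ℝ)) := Real.rpow_nonneg hR0.le _
          nlinarith [ENNReal.toReal_nonneg (a := K)]

lemma lemmaB (n : ℕ) (hn : 1 ≤ n) (C₀ M S : ℝ) (hC₀ : 0 < C₀) (hSM : S ≤ M)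
    (hS : -(n:ℝ) < S) :
    ∃ C : ℝ, 1 ≤ C ∧ ∀ h : EuclideanSpace ℝ (Fin n) → ℝ,
      Measurable h → (∀ p, 0 ≤ h p) → (∀ᵐ p, h p ≤ C₀) →
      (∫⁻ p, ENNReal.ofReal (Real.sqrt (1 + ‖p‖ ^ 2) ^ S * h p))
        ≤ ENNReal.ofReal C *
          (∫⁻ p, ENNReal.ofReal (Real.sqrt (1 + ‖p‖ ^ 2) ^ M * h p))
            ^ ((S + (n:ℝ)) / (M + (n:ℝ))) := by
  obtain ⟨cA, hcA0, hA⟩ := lemmaA n hn S hS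
  have hSn : (0:ℝ) < S + n := by linarith
  have hMn : (0:ℝ) < M + n := by linarith
  set θ : ℝ := (S + (n:ℝ)) / (M + (n:ℝ)) with hθdef
  have hθ : 0 < θ := div_pos hSn hMn
  refine ⟨C₀ * cA + 1, by nlinarith, fun h hmeas hpos hbd => ?_⟩
  have hp0pos : ∀ p : EuclideanSpace ℝ (Fin n), (0:ℝ) < Real.sqrt (1 + ‖p‖ ^ 2) :=
    fun p => lt_of_lt_of_le one_pos (one_le_p0 p)
  have hp0cont : Continuous fun p : EuclideanSpace ℝ (Fin n) => Real.sqrt (1 + ‖p‖ ^ 2) :=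
    (continuous_const.add ((continuous_norm).pow 2)).sqrt
  have hp0meas : Measurable fun p : EuclideanSpace ℝ (Fin n) => Real.sqrt (1 + ‖p‖ ^ 2) :=
    hp0cont.measurable
  have hrpowmeas : ∀ e : ℝ,
      Measurable fun p : EuclideanSpace ℝ (Fin n) => Real.sqrt (1 + ‖p‖ ^ 2) ^ e := fun e =>
    (hp0cont.rpow_const fun x => Or.inl (hp0pos x).ne').measurable
  set G : ℝ≥0∞ := ∫⁻ p, ENNReal.ofReal (Real.sqrt (1 + ‖p‖ ^ 2) ^ M * h p) with hG
  have hCpos : (0:ℝ) < C₀ * cA + 1 := by nlinarith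
  rcases eq_or_ne G ⊤ with hGt | hGt
  · rw [hGt, ENNReal.top_rpow_of_pos hθ, ENNReal.mul_top
      (by simpa [ENNReal.ofReal_eq_zero] using hCpos.not_ge)]
    exact le_top
  have hGmeas : Measurable fun p => ENNReal.ofReal (Real.sqrt (1 + ‖p‖ ^ 2) ^ M * h p) :=
    ((hrpowmeas M).mul hmeas).ennreal_ofReal
  rcases eq_or_ne G 0 with hG0 | hG0
  · have h0 : ∀ᵐ p : EuclideanSpace ℝ (Fin n),
        ENNReal.ofReal (Real.sqrt (1 + ‖p‖ ^ 2) ^ S * h p) = 0 := by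
      have := (lintegral_eq_zero_iff hGmeas).1 hG0
      filter_upwards [this] with p hp
      simp only [Pi.zero_apply, ENNReal.ofReal_eq_zero] at hp ⊢
      have := Real.rpow_pos_of_pos (hp0pos p) M
      have hh0 : h p = 0 := le_antisymm (by nlinarith) (hpos p)
      simp [hh0]
    rw [lintegral_congr_ae h0]
    simp
  -- main case
  have haG : 0 < G.toReal := ENNReal.toReal_pos hG0 hGt
  set a : ℝ := G.toReal with hadef
  set R : ℝ := a ^ (1 / (M + (n:ℝ))) with hRdef
  have hR0 : 0 < R := Real.rpow_pos_of_pos haG _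
  have hGa : G = ENNReal.ofReal a := (ENNReal.ofReal_toReal hGt).symm
  have hofa : ENNReal.ofReal (a ^ θ) = G ^ θ := by
    rw [hGa, ENNReal.ofReal_rpow_of_pos haG]
  -- tail bound, pointwise
  have htail : ∀ p : EuclideanSpace ℝ (Fin n), R < Real.sqrt (1 + ‖p‖ ^ 2) →
      ENNReal.ofReal (Real.sqrt (1 + ‖p‖ ^ 2) ^ S * h p)
        ≤ ENNReal.ofReal (R ^ (S - M)) *
            ENNReal.ofReal (Real.sqrt (1 + ‖p‖ ^ 2) ^ M * h p) := by
    intro p hp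
    rw [← ENNReal.ofReal_mul (Real.rpow_nonneg hR0.le _)]
    refine ENNReal.ofReal_le_ofReal ?_
    have h1 : Real.sqrt (1 + ‖p‖ ^ 2) ^ S
        = Real.sqrt (1 + ‖p‖ ^ 2) ^ (S - M) * Real.sqrt (1 + ‖p‖ ^ 2) ^ M := by
      rw [← Real.rpow_add (hp0pos p)]
      ring_nf
    have h2 : Real.sqrt (1 + ‖p‖ ^ 2) ^ (S - M) ≤ R ^ (S - M) :=
      Real.rpow_le_rpow_of_nonpos hR0 hp.le (by linarith)
    have h3 : (0:ℝ) ≤ Real.sqrt (1 + ‖p‖ ^ 2) ^ M * h p :=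
      mul_nonneg (Real.rpow_nonneg (Real.sqrt_nonneg _) _) (hpos p)
    calc Real.sqrt (1 + ‖p‖ ^ 2) ^ S * h p
        = Real.sqrt (1 + ‖p‖ ^ 2) ^ (S - M) * (Real.sqrt (1 + ‖p‖ ^ 2) ^ M * h p) := by
          rw [h1]; ring
      _ ≤ R ^ (S - M) * (Real.sqrt (1 + ‖p‖ ^ 2) ^ M * h p) := by
          exact mul_le_mul_of_nonneg_right h2 h3
  have hRSM : R ^ (S - M) * a = a ^ θ := by
    rw [hRdef, ← Real.rpow_mul haG.le]
    nth_rewrite 2 [show a = a ^ (1:ℝ) from (Real.rpow_one a).symm]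
    rw [← Real.rpow_add haG]
    congr 1
    rw [hθdef]
    field_simp
    ring
  rcases lt_or_ge R 1 with hR1 | hR1
  · -- R < 1 : the set {p₀ ≤ R} is empty, tail bound holds everywhere
    calc (∫⁻ p, ENNReal.ofReal (Real.sqrt (1 + ‖p‖ ^ 2) ^ S * h p))
        ≤ ∫⁻ p, ENNReal.ofReal (R ^ (S - M)) *
            ENNReal.ofReal (Real.sqrt (1 + ‖p‖ ^ 2) ^ M * h p) := by
          refine lintegral_mono fun p => htail p (lt_of_lt_of_le hR1 (one_le_p0 p))
      _ = ENNReal.ofReal (R ^ (S - M)) * G := lintegral_const_mul' _ _ ENNReal.ofReal_ne_top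
      _ = ENNReal.ofReal (a ^ θ) := by
          rw [hGa, ← ENNReal.ofReal_mul (Real.rpow_nonneg hR0.le _), hRSM]
      _ ≤ ENNReal.ofReal (C₀ * cA + 1) * G ^ θ := by
          rw [← hofa]
          nth_rewrite 1 [← one_mul (ENNReal.ofReal (a ^ θ))]
          gcongr
          rw [show (1:ℝ≥0∞) = ENNReal.ofReal 1 from ENNReal.ofReal_one.symm]
          exact ENNReal.ofReal_le_ofReal (by nlinarith)
  · -- R ≥ 1
    set s : Set (EuclideanSpace ℝ (Fin n)) := {p | Real.sqrt (1 + ‖p‖ ^ 2) ≤ R} with hs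
    have hsm : MeasurableSet s := measurableSet_le hp0meas measurable_const
    have hhead : (∫⁻ p in s, ENNReal.ofReal (Real.sqrt (1 + ‖p‖ ^ 2) ^ S * h p))
        ≤ ENNReal.ofReal (C₀ * (cA * R ^ (S + (n:ℝ)))) := by
      calc (∫⁻ p in s, ENNReal.ofReal (Real.sqrt (1 + ‖p‖ ^ 2) ^ S * h p))
          ≤ ∫⁻ p in s, ENNReal.ofReal C₀ *
              ENNReal.ofReal (Real.sqrt (1 + ‖p‖ ^ 2) ^ S) := by
            refine setLIntegral_mono_ae
              ((measurable_const.mul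
                ((hrpowmeas S).ennreal_ofReal)).aemeasurable) ?_
            filter_upwards [hbd] with p hbp
            intro _
            rw [← ENNReal.ofReal_mul hC₀.le]
            refine ENNReal.ofReal_le_ofReal ?_
            have := Real.rpow_nonneg (Real.sqrt_nonneg (1 + ‖p‖ ^ 2)) S
            calc Real.sqrt (1 + ‖p‖ ^ 2) ^ S * h p
                ≤ Real.sqrt (1 + ‖p‖ ^ 2) ^ S * C₀ := by
                  exact mul_le_mul_of_nonneg_left hbp this
              _ = C₀ * Real.sqrt (1 + ‖p‖ ^ 2) ^ S := mul_comm _ _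
        _ = ENNReal.ofReal C₀ *
              ∫⁻ p in s, ENNReal.ofReal (Real.sqrt (1 + ‖p‖ ^ 2) ^ S) :=
            lintegral_const_mul' _ _ ENNReal.ofReal_ne_top
        _ ≤ ENNReal.ofReal C₀ * ENNReal.ofReal (cA * R ^ (S + (n:ℝ))) := by
            gcongr
            exact hA R hR1
        _ = ENNReal.ofReal (C₀ * (cA * R ^ (S + (n:ℝ)))) := by
            rw [← ENNReal.ofReal_mul hC₀.le]
    have htail2 : (∫⁻ p in sᶜ, ENNReal.ofReal (Real.sqrt (1 + ‖p‖ ^ 2) ^ S * h p))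
        ≤ ENNReal.ofReal (a ^ θ) := by
      calc (∫⁻ p in sᶜ, ENNReal.ofReal (Real.sqrt (1 + ‖p‖ ^ 2) ^ S * h p))
          ≤ ∫⁻ p in sᶜ, ENNReal.ofReal (R ^ (S - M)) *
              ENNReal.ofReal (Real.sqrt (1 + ‖p‖ ^ 2) ^ M * h p) := by
            refine setLIntegral_mono' hsm.compl fun p hp => ?_
            exact htail p (by simpa [hs, not_le] using hp)
        _ = ENNReal.ofReal (R ^ (S - M)) *
              ∫⁻ p in sᶜ, ENNReal.ofReal (Real.sqrt (1 + ‖p‖ ^ 2) ^ M * h p) :=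
            lintegral_const_mul' _ _ ENNReal.ofReal_ne_top
        _ ≤ ENNReal.ofReal (R ^ (S - M)) * G :=
            mul_le_mul_right (setLIntegral_le_lintegral _ _) _
        _ = ENNReal.ofReal (a ^ θ) := by
            rw [hGa, ← ENNReal.ofReal_mul (Real.rpow_nonneg hR0.le _), hRSM]
    have hRth : R ^ (S + (n:ℝ)) = a ^ θ := by
      rw [hRdef, ← Real.rpow_mul haG.le]
      congr 1
      rw [hθdef, one_div, inv_mul_eq_div]
    calc (∫⁻ p, ENNReal.ofReal (Real.sqrt (1 + ‖p‖ ^ 2) ^ S * h p))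
        = (∫⁻ p in s, ENNReal.ofReal (Real.sqrt (1 + ‖p‖ ^ 2) ^ S * h p))
            + ∫⁻ p in sᶜ, ENNReal.ofReal (Real.sqrt (1 + ‖p‖ ^ 2) ^ S * h p) :=
          (lintegral_add_compl _ hsm).symm
      _ ≤ ENNReal.ofReal (C₀ * (cA * R ^ (S + (n:ℝ)))) + ENNReal.ofReal (a ^ θ) :=
          add_le_add hhead htail2
      _ = ENNReal.ofReal ((C₀ * cA + 1) * a ^ θ) := by
          rw [hRth, ← ENNReal.ofReal_add (by positivity) (by positivity)]
          congr 1
          ring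
      _ = ENNReal.ofReal (C₀ * cA + 1) * G ^ θ := by
          rw [ENNReal.ofReal_mul hCpos.le, hofa]

/-- **General interpolation inequality.**
For `g : ℝ^{d_x} × ℝ^{d_p} → [0,∞)` measurable with `g ≤ C₀` a.e., `1 ≤ q < ∞` and
`M ≥ S > -d_p`, there is `C = C(C₀, S, M, d_p) > 0` with
`‖p₀^S g‖_{L^q_x L^1_p} ≤ C ‖p₀^M g‖_{L^{q(S+d_p)/(M+d_p)}_x L^1_p}^{(S+d_p)/(M+d_p)}`,
where `p₀ = √(1+|p|²)`. -/
theorem general_interpolation_inequality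
    (dx dp : ℕ) (hdx : 1 ≤ dx) (hdp : 1 ≤ dp)
    (C₀ M S : ℝ) (hC₀ : 0 < C₀) (hSM : S ≤ M) (hS : -(dp : ℝ) < S) :
    ∃ C : ℝ, 0 < C ∧
      ∀ (g : EuclideanSpace ℝ (Fin dx) → EuclideanSpace ℝ (Fin dp) → ℝ),
        Measurable (Function.uncurry g) →
        (∀ x p, 0 ≤ g x p) →
        (∀ᵐ z : EuclideanSpace ℝ (Fin dx) × EuclideanSpace ℝ (Fin dp), g z.1 z.2 ≤ C₀) →
        ∀ q : ℝ, 1 ≤ q →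
          (∫⁻ x : EuclideanSpace ℝ (Fin dx),
              (∫⁻ p : EuclideanSpace ℝ (Fin dp),
                ENNReal.ofReal (Real.sqrt (1 + ‖p‖ ^ 2) ^ S * g x p)) ^ q) ^ (1 / q)
            ≤ ENNReal.ofReal C *
              ((∫⁻ x : EuclideanSpace ℝ (Fin dx),
                  (∫⁻ p : EuclideanSpace ℝ (Fin dp),
                    ENNReal.ofReal (Real.sqrt (1 + ‖p‖ ^ 2) ^ M * g x p))
                      ^ (q * (S + (dp : ℝ)) / (M + (dp : ℝ)))) ^
                    ((M + (dp : ℝ)) / (q * (S + (dp : ℝ)))))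
                ^ ((S + (dp : ℝ)) / (M + (dp : ℝ))) := by
  obtain ⟨C, hC1, hB⟩ := lemmaB dp hdp C₀ M S hC₀ hSM hS
  refine ⟨C, lt_of_lt_of_le one_pos hC1, ?_⟩
  intro g hmeas hpos hbdd q hq
  have hq0 : (0:ℝ) < q := lt_of_lt_of_le one_pos hq
  have hSn : (0:ℝ) < S + (dp:ℝ) := by linarith
  have hMn : (0:ℝ) < M + (dp:ℝ) := by linarith
  set θ : ℝ := (S + (dp:ℝ)) / (M + (dp:ℝ)) with hθdef
  set G : EuclideanSpace ℝ (Fin dx) → ℝ≥0∞ := fun x =>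
    ∫⁻ p, ENNReal.ofReal (Real.sqrt (1 + ‖p‖ ^ 2) ^ M * g x p) with hGdef
  have hae : ∀ᵐ x : EuclideanSpace ℝ (Fin dx),
      (∫⁻ p, ENNReal.ofReal (Real.sqrt (1 + ‖p‖ ^ 2) ^ S * g x p))
        ≤ ENNReal.ofReal C * G x ^ θ := by
    rw [Measure.volume_eq_prod] at hbdd
    filter_upwards [Measure.ae_ae_of_ae_prod hbdd] with x hx
    exact hB (g x) hmeas.of_uncurry_left (hpos x) hx
  have hqinv : (0:ℝ) ≤ 1 / q := by positivity
  set X : ℝ≥0∞ := ∫⁻ x, G x ^ (q * (S + (dp:ℝ)) / (M + (dp:ℝ))) with hXdef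
  calc (∫⁻ x : EuclideanSpace ℝ (Fin dx),
          (∫⁻ p : EuclideanSpace ℝ (Fin dp),
            ENNReal.ofReal (Real.sqrt (1 + ‖p‖ ^ 2) ^ S * g x p)) ^ q) ^ (1 / q)
      ≤ (∫⁻ x, (ENNReal.ofReal C * G x ^ θ) ^ q) ^ (1 / q) := by
        refine ENNReal.rpow_le_rpow ?_ hqinv
        refine lintegral_mono_ae ?_
        filter_upwards [hae] with x hx
        exact ENNReal.rpow_le_rpow hx hq0.le
    _ = ((ENNReal.ofReal C) ^ q * ∫⁻ x, G x ^ (θ * q)) ^ (1 / q) := by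
        rw [← lintegral_const_mul' _ _
          (ENNReal.rpow_ne_top_of_nonneg hq0.le ENNReal.ofReal_ne_top)]
        congr 1
        refine lintegral_congr fun x => ?_
        rw [ENNReal.mul_rpow_of_nonneg _ _ hq0.le, ← ENNReal.rpow_mul]
    _ = ENNReal.ofReal C * (∫⁻ x, G x ^ (θ * q)) ^ (1 / q) := by
        rw [ENNReal.mul_rpow_of_nonneg _ _ hqinv, ← ENNReal.rpow_mul,
          mul_one_div_cancel hq0.ne', ENNReal.rpow_one]
    _ = ENNReal.ofReal C * X ^ (1 / q) := by
        rw [hXdef]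
        congr 2
        refine lintegral_congr fun x => ?_
        congr 1
        rw [hθdef]
        ring
    _ = ENNReal.ofReal C * (X ^ ((M + (dp:ℝ)) / (q * (S + (dp:ℝ))))) ^ θ := by
        have hexp : (M + (dp:ℝ)) / (q * (S + (dp:ℝ))) * θ = 1 / q := by
          rw [hθdef]
          field_simp
        rw [← ENNReal.rpow_mul, hexp]

end
end

section
/- Let d_x, d_p ≥ 1 be integers and C₀ > 0. Let g : ℝ^{d_x} × ℝ^{d_p} → [0,∞) be measurable with g(x,p) ≤ C₀ for almost every (x,p). Let M, S be real numbers with M ≥ S > -d_p. Then there is a constant C > 0, depending only on C₀, S, M and d_p, such that ‖p_0^S g‖_{L^{(M+d_p)/(S+d_p)}_x L^1_p} ≤ C ‖p_0^M g‖_{L^1_x L^1_p}^{(S+d_p)/(M+d_p)}. -/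
/-!
Fix `x` and split the `p`-integral at `p₀ = R`. On `{p₀ ≤ R}` use `g ≤ C₀` together with
`p₀^S ≤ R^{S-σ} |p|^σ`, `σ = min S 0`, and the scaling `p = R u`:
`∫_{p₀ ≤ R} p₀^S dp ≤ R^{S+d_p} ∫_{|u| < 1} |u|^σ du`, the last integral being finite because
`σ > -d_p`. On `{p₀ > R}` use `p₀^S ≤ R^{S-M} p₀^M`. Choosing
`R^{M+d_p} = ∫ p₀^M g(x,p) dp` balances the two pieces and gives
`∫ p₀^S g(x,p) dp ≤ C (∫ p₀^M g(x,p) dp)^θ` with `θ = (S+d_p)/(M+d_p)`; raising this to the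
power `1/θ` and integrating in `x` yields the inequality.
-/

open MeasureTheory Metric Module

section JapaneseBracket

variable {E : Type*} [NormedAddCommGroup E]

theorem one_le_sqrt_one_add_norm_sq (x : E) : 1 ≤ √(1 + ‖x‖ ^ 2) :=
  Real.one_le_sqrt.mpr (by nlinarith [norm_nonneg x])

theorem norm_lt_sqrt_one_add_norm_sq (x : E) : ‖x‖ < √(1 + ‖x‖ ^ 2) :=
  Real.lt_sqrt_of_sq_lt (by linarith)

end JapaneseBracket

theorem nontrivial_of_neg_finrank_lt_of_neg {E : Type*} [AddCommGroup E] [Module ℝ E] {s : ℝ}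
    (hs : -(finrank ℝ E : ℝ) < s) (hs0 : s < 0) : Nontrivial E :=
  Module.nontrivial_of_finrank_pos (R := ℝ) <| by
    exact_mod_cast (by linarith : (0 : ℝ) < finrank ℝ E)

section AddHaar

variable {E : Type*} [NormedAddCommGroup E] [NormedSpace ℝ E] [FiniteDimensional ℝ E]
  [MeasurableSpace E] [BorelSpace E] (μ : Measure E) [μ.IsAddHaarMeasure]

theorem setLIntegral_ball_norm_rpow {s R : ℝ} (hR : 0 < R) :
    ∫⁻ x in ball 0 R, ENNReal.ofReal (‖x‖ ^ s) ∂μ =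
      ENNReal.ofReal (R ^ (s + finrank ℝ E)) * ∫⁻ x in ball 0 1, ENNReal.ofReal (‖x‖ ^ s) ∂μ := by
  have hmeas : Measurable fun x : E => ENNReal.ofReal (‖x‖ ^ s) := by fun_prop
  have hpre : (R • · : E → E) ⁻¹' ball 0 R = ball 0 1 := by
    ext x
    simp [norm_smul, abs_of_pos hR, hR]
  have hscale : ∫⁻ x in ball 0 1, ENNReal.ofReal (‖R • x‖ ^ s) ∂μ =
      ENNReal.ofReal (R ^ finrank ℝ E)⁻¹ * ∫⁻ x in ball 0 R, ENNReal.ofReal (‖x‖ ^ s) ∂μ := by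
    rw [← hpre, ← setLIntegral_map measurableSet_ball hmeas (measurable_const_smul R),
      Measure.map_addHaar_smul μ hR.ne', Measure.restrict_smul, lintegral_smul_measure,
      abs_of_pos (by positivity), smul_eq_mul]
  have hsmul (x : E) :
      ENNReal.ofReal (‖R • x‖ ^ s) = ENNReal.ofReal (R ^ s) * ENNReal.ofReal (‖x‖ ^ s) := by
    rw [norm_smul, Real.norm_of_nonneg hR.le, Real.mul_rpow hR.le (norm_nonneg x),
      ENNReal.ofReal_mul (by positivity)]
  simp_rw [hsmul] at hscale
  rw [lintegral_const_mul' _ _ ENNReal.ofReal_ne_top] at hscale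
  calc ∫⁻ x in ball 0 R, ENNReal.ofReal (‖x‖ ^ s) ∂μ
      = ENNReal.ofReal (R ^ finrank ℝ E) *
          (ENNReal.ofReal (R ^ finrank ℝ E)⁻¹ * ∫⁻ x in ball 0 R, ENNReal.ofReal (‖x‖ ^ s) ∂μ) := by
        rw [← mul_assoc, ← ENNReal.ofReal_mul (by positivity), mul_inv_cancel₀ (by positivity),
          ENNReal.ofReal_one, one_mul]
    _ = ENNReal.ofReal (R ^ (s + finrank ℝ E)) *
          ∫⁻ x in ball 0 1, ENNReal.ofReal (‖x‖ ^ s) ∂μ := by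
        rw [← hscale, Real.rpow_add hR, Real.rpow_natCast, ENNReal.ofReal_mul (by positivity)]
        ring

theorem setLIntegral_ball_norm_rpow_lt_top {s : ℝ} (hs : -(finrank ℝ E : ℝ) < s) :
    ∫⁻ x in ball 0 1, ENNReal.ofReal (‖x‖ ^ s) ∂μ < ⊤ := by
  rcases le_or_gt 0 s with hs0 | hs0
  · calc ∫⁻ x in ball 0 1, ENNReal.ofReal (‖x‖ ^ s) ∂μ ≤ ∫⁻ _ in ball (0 : E) 1, 1 ∂μ :=
          setLIntegral_mono' measurableSet_ball fun x hx => ENNReal.ofReal_le_one.2 <|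
            Real.rpow_le_one (norm_nonneg x) (mem_ball_zero_iff.1 hx).le hs0
      _ = μ (ball 0 1) := setLIntegral_one _
      _ < ⊤ := measure_ball_lt_top
  · have := nontrivial_of_neg_finrank_lt_of_neg hs hs0
    refine Integrable.lintegral_lt_top <| integrableOn_ball_of_norm_le_rpow (C := 1) (α := -s)
      Module.finrank_pos (by linarith) (ae_of_all _ fun x => ?_)
      (measurable_norm.pow_const s).aestronglyMeasurable
    rw [neg_neg, one_mul, Real.norm_of_nonneg (by positivity)]

theorem setLIntegral_sqrt_one_add_norm_sq_rpow_le {S R : ℝ} (hS : -(finrank ℝ E : ℝ) < S)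
    (hR : 0 < R) :
    ∫⁻ p in {p : E | √(1 + ‖p‖ ^ 2) ≤ R}, ENNReal.ofReal (√(1 + ‖p‖ ^ 2) ^ S) ∂μ ≤
      ENNReal.ofReal (R ^ (S + finrank ℝ E)) *
        ∫⁻ x in ball 0 1, ENNReal.ofReal (‖x‖ ^ min S 0) ∂μ := by
  set σ := min S 0
  have hmeas : MeasurableSet {p : E | √(1 + ‖p‖ ^ 2) ≤ R} :=
    measurableSet_le (by fun_prop) measurable_const
  have hsub : {p : E | √(1 + ‖p‖ ^ 2) ≤ R} ⊆ ball 0 R := fun p hp =>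
    mem_ball_zero_iff.2 ((norm_lt_sqrt_one_add_norm_sq p).trans_le hp)
  have hpt : ∀ᵐ p ∂μ, p ∈ {p : E | √(1 + ‖p‖ ^ 2) ≤ R} →
      ENNReal.ofReal (√(1 + ‖p‖ ^ 2) ^ S) ≤
        ENNReal.ofReal (R ^ (S - σ)) * ENNReal.ofReal (‖p‖ ^ σ) := by
    rcases le_or_gt 0 S with hS0 | hS0
    · filter_upwards with p hp
      rw [show σ = 0 from min_eq_right hS0, sub_zero, Real.rpow_zero, ENNReal.ofReal_one, mul_one]
      exact ENNReal.ofReal_le_ofReal (Real.rpow_le_rpow (by positivity) hp hS0)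
    · have := nontrivial_of_neg_finrank_lt_of_neg hS hS0
      filter_upwards [measure_eq_zero_iff_ae_notMem.1 (measure_singleton (0 : E))] with p hp0 _
      rw [show σ = S from min_eq_left hS0.le, sub_self, Real.rpow_zero, ENNReal.ofReal_one, one_mul]
      exact ENNReal.ofReal_le_ofReal <| Real.rpow_le_rpow_of_nonpos (norm_pos_iff.2 hp0)
        (norm_lt_sqrt_one_add_norm_sq p).le hS0.le
  calc ∫⁻ p in {p : E | √(1 + ‖p‖ ^ 2) ≤ R}, ENNReal.ofReal (√(1 + ‖p‖ ^ 2) ^ S) ∂μ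
      ≤ ∫⁻ p in {p : E | √(1 + ‖p‖ ^ 2) ≤ R},
          ENNReal.ofReal (R ^ (S - σ)) * ENNReal.ofReal (‖p‖ ^ σ) ∂μ :=
        setLIntegral_mono_ae' hmeas hpt
    _ ≤ ∫⁻ p in ball 0 R, ENNReal.ofReal (R ^ (S - σ)) * ENNReal.ofReal (‖p‖ ^ σ) ∂μ :=
        lintegral_mono_set hsub
    _ = ENNReal.ofReal (R ^ (S - σ)) *
          (ENNReal.ofReal (R ^ (σ + finrank ℝ E)) *
            ∫⁻ x in ball 0 1, ENNReal.ofReal (‖x‖ ^ σ) ∂μ) := by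
        rw [lintegral_const_mul' _ _ ENNReal.ofReal_ne_top, setLIntegral_ball_norm_rpow μ hR]
    _ = ENNReal.ofReal (R ^ (S + finrank ℝ E)) *
          ∫⁻ x in ball 0 1, ENNReal.ofReal (‖x‖ ^ σ) ∂μ := by
        rw [← mul_assoc, ← ENNReal.ofReal_mul (by positivity), ← Real.rpow_add hR]
        ring_nf

end AddHaar

section Interpolation

variable {E : Type*} [NormedAddCommGroup E] [NormedSpace ℝ E] [FiniteDimensional ℝ E]
  [MeasurableSpace E] [BorelSpace E] (μ : Measure E) [μ.IsAddHaarMeasure]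
  {C₀ M S : ℝ} {h : E → ℝ}

theorem lintegral_sqrt_one_add_norm_sq_rpow_mul_le_of_radius (hS : -(finrank ℝ E : ℝ) < S)
    (hSM : S ≤ M) (hh0 : ∀ p, 0 ≤ h p) (hhC : ∀ᵐ p ∂μ, h p ≤ C₀) {R : ℝ} (hR : 0 < R) :
    ∫⁻ p, ENNReal.ofReal (√(1 + ‖p‖ ^ 2) ^ S * h p) ∂μ ≤
      ENNReal.ofReal C₀ * (ENNReal.ofReal (R ^ (S + finrank ℝ E)) *
          ∫⁻ x in ball 0 1, ENNReal.ofReal (‖x‖ ^ min S 0) ∂μ) +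
        ENNReal.ofReal (R ^ (S - M)) * ∫⁻ p, ENNReal.ofReal (√(1 + ‖p‖ ^ 2) ^ M * h p) ∂μ := by
  set s := {p : E | √(1 + ‖p‖ ^ 2) ≤ R}
  have hs : MeasurableSet s := measurableSet_le (by fun_prop) measurable_const
  have hinner : ∫⁻ p in s, ENNReal.ofReal (√(1 + ‖p‖ ^ 2) ^ S * h p) ∂μ ≤
      ENNReal.ofReal C₀ * ∫⁻ p in s, ENNReal.ofReal (√(1 + ‖p‖ ^ 2) ^ S) ∂μ := by
    rw [← lintegral_const_mul' _ _ ENNReal.ofReal_ne_top]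
    refine lintegral_mono_ae <| (ae_restrict_of_ae hhC).mono fun p hp => ?_
    rw [← ENNReal.ofReal_mul' (by positivity), mul_comm]
    exact ENNReal.ofReal_le_ofReal (mul_le_mul_of_nonneg_right hp (by positivity))
  have houter : ∫⁻ p in sᶜ, ENNReal.ofReal (√(1 + ‖p‖ ^ 2) ^ S * h p) ∂μ ≤
      ENNReal.ofReal (R ^ (S - M)) * ∫⁻ p in sᶜ, ENNReal.ofReal (√(1 + ‖p‖ ^ 2) ^ M * h p) ∂μ := by
    rw [← lintegral_const_mul' _ _ ENNReal.ofReal_ne_top]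
    refine setLIntegral_mono' hs.compl fun p hp => ?_
    have hRp : R < √(1 + ‖p‖ ^ 2) := not_le.1 hp
    have hp0 : 0 < √(1 + ‖p‖ ^ 2) := hR.trans hRp
    rw [← ENNReal.ofReal_mul (by positivity)]
    refine ENNReal.ofReal_le_ofReal ?_
    calc √(1 + ‖p‖ ^ 2) ^ S * h p = √(1 + ‖p‖ ^ 2) ^ (S - M) * (√(1 + ‖p‖ ^ 2) ^ M * h p) := by
          rw [← mul_assoc, ← Real.rpow_add hp0, sub_add_cancel]
      _ ≤ R ^ (S - M) * (√(1 + ‖p‖ ^ 2) ^ M * h p) :=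
          mul_le_mul_of_nonneg_right (Real.rpow_le_rpow_of_nonpos hR hRp.le (by linarith))
            (mul_nonneg (by positivity) (hh0 p))
  calc ∫⁻ p, ENNReal.ofReal (√(1 + ‖p‖ ^ 2) ^ S * h p) ∂μ
      = ∫⁻ p in s, ENNReal.ofReal (√(1 + ‖p‖ ^ 2) ^ S * h p) ∂μ +
          ∫⁻ p in sᶜ, ENNReal.ofReal (√(1 + ‖p‖ ^ 2) ^ S * h p) ∂μ :=
        (lintegral_add_compl _ hs).symm
    _ ≤ _ := add_le_add
      (hinner.trans (by gcongr; exact setLIntegral_sqrt_one_add_norm_sq_rpow_le μ hS hR))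
      (houter.trans (by gcongr; exact Measure.restrict_le_self))

theorem lintegral_sqrt_one_add_norm_sq_rpow_mul_le (hS : -(finrank ℝ E : ℝ) < S) (hSM : S ≤ M)
    (hh0 : ∀ p, 0 ≤ h p) (hhC : ∀ᵐ p ∂μ, h p ≤ C₀) :
    ∫⁻ p, ENNReal.ofReal (√(1 + ‖p‖ ^ 2) ^ S * h p) ∂μ ≤
      (ENNReal.ofReal C₀ * ∫⁻ x in ball 0 1, ENNReal.ofReal (‖x‖ ^ min S 0) ∂μ + 1) *
        (∫⁻ p, ENNReal.ofReal (√(1 + ‖p‖ ^ 2) ^ M * h p) ∂μ) ^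
          ((S + finrank ℝ E) / (M + finrank ℝ E)) := by
  set B := ∫⁻ p, ENNReal.ofReal (√(1 + ‖p‖ ^ 2) ^ M * h p) ∂μ
  set θ := (S + finrank ℝ E) / (M + finrank ℝ E)
  have hMd : 0 < M + finrank ℝ E := by linarith
  have hθ : 0 < θ := div_pos (by linarith) hMd
  rcases eq_top_or_lt_top B with hBtop | hBtop
  · rw [hBtop, ENNReal.top_rpow_of_pos hθ, ENNReal.mul_top (by simp)]
    exact le_top
  rcases eq_or_ne B 0 with hB0 | hB0
  · have hle : ∫⁻ p, ENNReal.ofReal (√(1 + ‖p‖ ^ 2) ^ S * h p) ∂μ ≤ B :=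
      lintegral_mono fun p => ENNReal.ofReal_le_ofReal <| mul_le_mul_of_nonneg_right
        (Real.rpow_le_rpow_of_exponent_le (one_le_sqrt_one_add_norm_sq p) hSM) (hh0 p)
    rw [hB0] at hle
    exact hle.trans bot_le
  set b := B.toReal
  have hb : 0 < b := ENNReal.toReal_pos hB0 hBtop.ne
  have hBb : B = ENNReal.ofReal b := (ENNReal.ofReal_toReal hBtop.ne).symm
  -- the radius balancing the two terms of the splitting bound
  set R := b ^ (M + finrank ℝ E)⁻¹
  have hball : ENNReal.ofReal (R ^ (S + finrank ℝ E)) = B ^ θ := by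
    rw [← Real.rpow_mul hb.le, inv_mul_eq_div, hBb, ENNReal.ofReal_rpow_of_pos hb]
  have htail : ENNReal.ofReal (R ^ (S - M)) * B = B ^ θ := by
    rw [hBb, ← ENNReal.ofReal_mul (by positivity), ← Real.rpow_mul hb.le,
      ← Real.rpow_add_one hb.ne', ENNReal.ofReal_rpow_of_pos hb]
    congr 2
    simp only [θ]
    field_simp
    ring
  calc ∫⁻ p, ENNReal.ofReal (√(1 + ‖p‖ ^ 2) ^ S * h p) ∂μ
      ≤ _ := lintegral_sqrt_one_add_norm_sq_rpow_mul_le_of_radius μ hS hSM hh0 hhC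
        (Real.rpow_pos_of_pos hb _)
    _ = _ := by
      rw [hball, htail]
      ring

end Interpolation

theorem lintegral_rpow_inv_rpow_le_of_ae_le_mul_rpow {α : Type*} [MeasurableSpace α]
    {ν : Measure α} {F G : α → ENNReal} {c : ENNReal} (hc : c ≠ ⊤) {θ : ℝ} (hθ : 0 < θ)
    (hFG : ∀ᵐ x ∂ν, F x ≤ c * G x ^ θ) :
    (∫⁻ x, F x ^ θ⁻¹ ∂ν) ^ θ ≤ c * (∫⁻ x, G x ∂ν) ^ θ := by
  have hF : ∀ᵐ x ∂ν, F x ^ θ⁻¹ ≤ c ^ θ⁻¹ * G x := hFG.mono fun x hx => by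
    grw [hx, ENNReal.mul_rpow_of_nonneg _ _ (inv_nonneg.2 hθ.le), ← ENNReal.rpow_mul,
      mul_inv_cancel₀ hθ.ne', ENNReal.rpow_one]
  calc (∫⁻ x, F x ^ θ⁻¹ ∂ν) ^ θ ≤ (∫⁻ x, c ^ θ⁻¹ * G x ∂ν) ^ θ := by
        gcongr ?_ ^ θ
        exact lintegral_mono_ae hF
    _ = c * (∫⁻ x, G x ∂ν) ^ θ := by
        rw [lintegral_const_mul' _ _ (ENNReal.rpow_ne_top_of_nonneg (inv_nonneg.2 hθ.le) hc),
          ENNReal.mul_rpow_of_nonneg _ _ hθ.le, ← ENNReal.rpow_mul, inv_mul_cancel₀ hθ.ne',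
          ENNReal.rpow_one]

theorem interpolation_inequality_general
    (dx dp : ℕ) (hdp : 1 ≤ dp)
    (C₀ M S : ℝ) (hSM : S ≤ M) (hS : -(dp : ℝ) < S) :
    ∃ C : ℝ, 0 < C ∧
      ∀ (g : EuclideanSpace ℝ (Fin dx) → EuclideanSpace ℝ (Fin dp) → ℝ),
        Measurable (Function.uncurry g) →
        (∀ x p, 0 ≤ g x p) →
        (∀ᵐ z : EuclideanSpace ℝ (Fin dx) × EuclideanSpace ℝ (Fin dp), g z.1 z.2 ≤ C₀) →
          (∫⁻ x : EuclideanSpace ℝ (Fin dx),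
              (∫⁻ p : EuclideanSpace ℝ (Fin dp),
                ENNReal.ofReal (Real.sqrt (1 + ‖p‖ ^ 2) ^ S * g x p))
                  ^ ((M + (dp : ℝ)) / (S + (dp : ℝ)))) ^ ((S + (dp : ℝ)) / (M + (dp : ℝ)))
            ≤ ENNReal.ofReal C *
              (∫⁻ x : EuclideanSpace ℝ (Fin dx),
                  ∫⁻ p : EuclideanSpace ℝ (Fin dp),
                    ENNReal.ofReal (Real.sqrt (1 + ‖p‖ ^ 2) ^ M * g x p))
                ^ ((S + (dp : ℝ)) / (M + (dp : ℝ))) := by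
  have hd : (finrank ℝ (EuclideanSpace ℝ (Fin dp)) : ℝ) = dp := by rw [finrank_euclideanSpace_fin]
  have hd_pos : -(finrank ℝ (EuclideanSpace ℝ (Fin dp)) : ℝ) < 0 := by
    rw [hd, neg_lt_zero]
    exact_mod_cast hdp
  rw [← hd] at hS
  set c := ENNReal.ofReal C₀ *
    (∫⁻ x in ball (0 : EuclideanSpace ℝ (Fin dp)) 1, ENNReal.ofReal (‖x‖ ^ min S 0)) + 1
  have hc : c ≠ ⊤ := ENNReal.add_ne_top.2 ⟨ENNReal.mul_ne_top ENNReal.ofReal_ne_top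
    (setLIntegral_ball_norm_rpow_lt_top volume (lt_min hS hd_pos)).ne, ENNReal.one_ne_top⟩
  refine ⟨c.toReal, ENNReal.toReal_pos (by simp [c]) hc, fun g _ hg0 hgC => ?_⟩
  rw [ENNReal.ofReal_toReal hc, ← inv_div, ← hd]
  rw [Measure.volume_eq_prod] at hgC
  refine lintegral_rpow_inv_rpow_le_of_ae_le_mul_rpow hc (div_pos (by linarith) (by linarith))
    ((Measure.ae_ae_of_ae_prod hgC).mono fun x hx => ?_)
  exact lintegral_sqrt_one_add_norm_sq_rpow_mul_le volume hS hSM (hg0 x) hx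

/-- **Interpolation inequality** (the special case `q = (M+d_p)/(S+d_p)`).
For `g : ℝ^{d_x} × ℝ^{d_p} → [0,∞)` measurable with `g ≤ C₀` a.e. and `M ≥ S > -d_p`,
there is `C = C(C₀, S, M, d_p) > 0` with
`‖p₀^S g‖_{L^{(M+d_p)/(S+d_p)}_x L^1_p} ≤ C ‖p₀^M g‖_{L^1_x L^1_p}^{(S+d_p)/(M+d_p)}`,
where `p₀ = √(1+|p|²)`. -/
theorem interpolation_inequality
    (dx dp : ℕ) (hdx : 1 ≤ dx) (hdp : 1 ≤ dp)
    (C₀ M S : ℝ) (hC₀ : 0 < C₀) (hSM : S ≤ M) (hS : -(dp : ℝ) < S) :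
    ∃ C : ℝ, 0 < C ∧
      ∀ (g : EuclideanSpace ℝ (Fin dx) → EuclideanSpace ℝ (Fin dp) → ℝ),
        Measurable (Function.uncurry g) →
        (∀ x p, 0 ≤ g x p) →
        (∀ᵐ z : EuclideanSpace ℝ (Fin dx) × EuclideanSpace ℝ (Fin dp), g z.1 z.2 ≤ C₀) →
          (∫⁻ x : EuclideanSpace ℝ (Fin dx),
              (∫⁻ p : EuclideanSpace ℝ (Fin dp),
                ENNReal.ofReal (Real.sqrt (1 + ‖p‖ ^ 2) ^ S * g x p))
                  ^ ((M + (dp : ℝ)) / (S + (dp : ℝ)))) ^ ((S + (dp : ℝ)) / (M + (dp : ℝ)))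
            ≤ ENNReal.ofReal C *
              (∫⁻ x : EuclideanSpace ℝ (Fin dx),
                  ∫⁻ p : EuclideanSpace ℝ (Fin dp),
                    ENNReal.ofReal (Real.sqrt (1 + ‖p‖ ^ 2) ^ M * g x p))
                ^ ((S + (dp : ℝ)) / (M + (dp : ℝ))) :=
  interpolation_inequality_general dx dp hdp C₀ M S hSM hS
end

section
/- Let p ∈ [1,∞), let M : [0,∞) → (0,∞) be a nondecreasing function, and let g : [0,∞) → [0,∞) be a nondecreasing function satisfying g(t) ≤ M(t)·(1 + (∫₀ᵗ g(s)^p ds)^{1/p}) for every t ≥ 0. Then g(t) ≤ 2 M(t) e^{4^p t M(t)^p} for every t ≥ 0. -/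
open MeasureTheory

/-- **A Gronwall-type lemma.**  If `g ≥ 0` is nondecreasing on `[0,∞)` and satisfies
`g(t) ≤ M(t) (1 + ‖g‖_{L^p([0,t))})` for a nondecreasing positive function `M` and some
`p ∈ [1,∞)`, then `g(t) ≤ 2 M(t) e^{4^p t M(t)^p}` for all `t ≥ 0`. -/
theorem gronwall_type_lemma
    (p : ℝ) (hp : 1 ≤ p)
    (M : ℝ → ℝ) (hMpos : ∀ t, 0 ≤ t → 0 < M t)
    (hMmono : ∀ s t, 0 ≤ s → s ≤ t → M s ≤ M t)
    (g : ℝ → ℝ) (hgnonneg : ∀ t, 0 ≤ t → 0 ≤ g t)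
    (hgmono : ∀ s t, 0 ≤ s → s ≤ t → g s ≤ g t)
    (hbound : ∀ t, 0 ≤ t →
      g t ≤ M t * (1 + (∫ s in (0 : ℝ)..t, g s ^ p) ^ (1 / p))) :
    ∀ t, 0 ≤ t → g t ≤ 2 * M t * Real.exp ((4 : ℝ) ^ p * t * M t ^ p) := by
  intro T hT
  have hppos : (0 : ℝ) < p := lt_of_lt_of_le one_pos hp
  set C : ℝ := M T with hC
  have hCpos : 0 < C := hMpos T hT
  set A : ℝ := 2 ^ p * C ^ p with hA
  have hApos : 0 < A := by
    have := Real.rpow_pos_of_pos (show (0:ℝ) < 2 by norm_num) p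
    have := Real.rpow_pos_of_pos hCpos p
    positivity
  set h : ℝ → ℝ := fun s => g s ^ p with hh
  have hhnn : ∀ s, 0 ≤ s → 0 ≤ h s := fun s hs => Real.rpow_nonneg (hgnonneg s hs) p
  have hhmono : ∀ s t, 0 ≤ s → s ≤ t → h s ≤ h t := fun s t hs hst =>
    Real.rpow_le_rpow (hgnonneg s hs) (hgmono s t hs hst) hppos.le
  have hint : ∀ t, 0 ≤ t → IntervalIntegrable h volume 0 t := by
    intro t ht
    apply MonotoneOn.intervalIntegrable
    intro x hx y hy hxy
    rw [Set.uIcc_of_le ht] at hx hy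
    exact hhmono x y hx.1 hxy
  set D : ℝ := h T with hD
  have hDnn : 0 ≤ D := hhnn T hT
  -- key integral inequality
  have key : ∀ t, 0 ≤ t → t ≤ T → h t ≤ A + A * ∫ s in (0:ℝ)..t, h s := by
    intro t ht htT
    have hInn : 0 ≤ ∫ s in (0:ℝ)..t, h s :=
      intervalIntegral.integral_nonneg ht (fun s hs => hhnn s hs.1)
    set I : ℝ := ∫ s in (0:ℝ)..t, h s with hI
    set X : ℝ := I ^ (1/p) with hX
    have hXnn : 0 ≤ X := Real.rpow_nonneg hInn _
    have hXp : X ^ p = I := by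
      rw [hX, one_div, Real.rpow_inv_rpow hInn hppos.ne']
    have h1 : g t ≤ C * (1 + X) := by
      refine (hbound t ht).trans ?_
      exact mul_le_mul_of_nonneg_right (hMmono t T ht htT) (by positivity)
    have h2 : h t ≤ (C * (1 + X)) ^ p := Real.rpow_le_rpow (hgnonneg t ht) h1 hppos.le
    have h3 : (C * (1 + X)) ^ p = C ^ p * (1 + X) ^ p :=
      Real.mul_rpow hCpos.le (by positivity)
    have h4 : (1 + X) ^ p ≤ 2 ^ p * (1 + X ^ p) := by
      have hXpnn : 0 ≤ X ^ p := Real.rpow_nonneg hXnn p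
      have h2p : (0:ℝ) < 2 ^ p := Real.rpow_pos_of_pos (by norm_num) p
      rcases le_total X 1 with hX1 | hX1
      · calc (1 + X) ^ p ≤ (2:ℝ) ^ p :=
              Real.rpow_le_rpow (by positivity) (by linarith) hppos.le
          _ ≤ 2 ^ p * (1 + X ^ p) := le_mul_of_one_le_right h2p.le (by linarith)
      · calc (1 + X) ^ p ≤ (2 * X) ^ p :=
              Real.rpow_le_rpow (by positivity) (by linarith) hppos.le
          _ = 2 ^ p * X ^ p := Real.mul_rpow (by norm_num) hXnn
          _ ≤ 2 ^ p * (1 + X ^ p) := by nlinarith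
    calc h t ≤ C ^ p * (1 + X) ^ p := h3 ▸ h2
      _ ≤ C ^ p * (2 ^ p * (1 + X ^ p)) :=
          mul_le_mul_of_nonneg_left h4 (Real.rpow_nonneg hCpos.le p)
      _ = A + A * I := by rw [hXp, hA]; ring
  -- iterated Gronwall bound
  have iter : ∀ n : ℕ, ∀ t, 0 ≤ t → t ≤ T →
      h t ≤ A * (∑ k ∈ Finset.range n, (A * t) ^ k / k.factorial)
        + D * ((A * t) ^ n / n.factorial) := by
    intro n
    induction n with
    | zero =>
      intro t ht htT
      simpa using hhmono t T ht htT
    | succ n ih =>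
      intro t ht htT
      set c : ℕ → ℝ := fun k => A * (A ^ k / k.factorial) with hc
      set e : ℝ := D * A ^ n / n.factorial with he
      have hmono : (∫ s in (0:ℝ)..t, h s)
          ≤ ∫ s in (0:ℝ)..t, ((∑ k ∈ Finset.range n, c k * s ^ k) + e * s ^ n) := by
        refine intervalIntegral.integral_mono_on ht (hint t ht)
          (Continuous.intervalIntegrable (by fun_prop) 0 t) ?_
        intro s hs
        refine (ih s hs.1 (hs.2.trans htT)).trans (le_of_eq ?_)
        rw [Finset.mul_sum]
        congr 1
        · exact Finset.sum_congr rfl fun k _ => by rw [hc, mul_pow]; ring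
        · rw [he, mul_pow]; ring
      have hval : (∫ s in (0:ℝ)..t, ((∑ k ∈ Finset.range n, c k * s ^ k) + e * s ^ n))
          = (∑ k ∈ Finset.range n, c k * (t ^ (k+1) / ((k:ℝ)+1)))
            + e * (t ^ (n+1) / ((n:ℝ)+1)) := by
        rw [intervalIntegral.integral_add
              (Continuous.intervalIntegrable (by fun_prop) 0 t)
              (Continuous.intervalIntegrable (by fun_prop) 0 t),
            intervalIntegral.integral_finset_sum
              (fun k _ => Continuous.intervalIntegrable (by fun_prop) 0 t)]
        simp only [intervalIntegral.integral_const_mul, integral_pow]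
        simp [zero_pow]
      have step : h t ≤ A + A * ((∑ k ∈ Finset.range n, c k * (t ^ (k+1) / ((k:ℝ)+1)))
            + e * (t ^ (n+1) / ((n:ℝ)+1))) := by
        refine (key t ht htT).trans ?_
        have := mul_le_mul_of_nonneg_left hmono hApos.le
        rw [hval] at this
        linarith
      refine step.trans (le_of_eq ?_)
      rw [Finset.sum_range_succ']
      have hterm : ∀ k : ℕ, A * (c k * (t ^ (k+1) / ((k:ℝ)+1)))
          = A * ((A * t) ^ (k+1) / (k+1).factorial) := by
        intro k
        have hkf : ((k.factorial : ℝ)) ≠ 0 := Nat.cast_ne_zero.2 k.factorial_pos.ne'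
        have hk1 : ((k:ℝ) + 1) ≠ 0 := by positivity
        rw [hc, Nat.factorial_succ, mul_pow]
        push_cast
        field_simp
        ring
      have h1 : A * (∑ k ∈ Finset.range n, c k * (t ^ (k+1) / ((k:ℝ)+1)))
          = ∑ k ∈ Finset.range n, A * ((A * t) ^ (k+1) / (k+1).factorial) := by
        rw [Finset.mul_sum]
        exact Finset.sum_congr rfl fun k _ => hterm k
      have h2 : A * (e * (t ^ (n+1) / ((n:ℝ)+1)))
          = D * ((A * t) ^ (n+1) / (n+1).factorial) := by
        have hkf : ((n.factorial : ℝ)) ≠ 0 := Nat.cast_ne_zero.2 n.factorial_pos.ne'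
        have hk1 : ((n:ℝ) + 1) ≠ 0 := by positivity
        rw [he, Nat.factorial_succ, mul_pow]
        push_cast
        field_simp
        ring
      calc A + A * ((∑ k ∈ Finset.range n, c k * (t ^ (k+1) / ((k:ℝ)+1)))
              + e * (t ^ (n+1) / ((n:ℝ)+1)))
          = A * (∑ k ∈ Finset.range n, c k * (t ^ (k+1) / ((k:ℝ)+1)))
              + A * (e * (t ^ (n+1) / ((n:ℝ)+1))) + A := by ring
        _ = (∑ k ∈ Finset.range n, A * ((A * t) ^ (k+1) / (k+1).factorial))
              + D * ((A * t) ^ (n+1) / (n+1).factorial) + A := by rw [h1, h2]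
        _ = A * ((∑ k ∈ Finset.range n, (A * t) ^ (k+1) / ((k+1).factorial : ℝ))
              + (A * t) ^ 0 / ((0:ℕ).factorial : ℝ)) + D * ((A * t) ^ (n+1) / (n+1).factorial) := by
            rw [mul_add, Finset.mul_sum]
            simp
            ring
  -- pass to the limit
  have hATnn : 0 ≤ A * T := mul_nonneg hApos.le hT
  have hlim : h T ≤ A * Real.exp (A * T) := by
    have hbd : ∀ n : ℕ, h T - A * Real.exp (A * T) ≤ D * ((A * T) ^ n / n.factorial) := by
      intro n
      have h1 := iter n T hT le_rfl
      have h2 : (∑ k ∈ Finset.range n, (A * T) ^ k / k.factorial) ≤ Real.exp (A * T) :=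
        Real.sum_le_exp_of_nonneg hATnn n
      nlinarith
    have htend : Filter.Tendsto (fun n : ℕ => D * ((A * T) ^ n / n.factorial))
        Filter.atTop (nhds 0) := by
      have := FloorSemiring.tendsto_pow_div_factorial_atTop (A * T)
      simpa using this.const_mul D
    linarith [ge_of_tendsto' htend hbd]
  -- conclude
  set R : ℝ := 2 * C * Real.exp ((4:ℝ) ^ p * T * C ^ p) with hR
  have hRpos : 0 < R := by positivity
  have hRp : A * Real.exp (A * T) ≤ R ^ p := by
    have hexp : Real.exp ((4:ℝ) ^ p * T * C ^ p) ^ p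
        = Real.exp ((4:ℝ) ^ p * T * C ^ p * p) := (Real.exp_mul _ p).symm
    have hRpeq : R ^ p = 2 ^ p * C ^ p * Real.exp ((4:ℝ) ^ p * T * C ^ p * p) := by
      rw [hR, Real.mul_rpow (by positivity) (Real.exp_pos _).le,
        Real.mul_rpow (by norm_num) hCpos.le, hexp]
    rw [hRpeq, hA]
    have h24 : (2:ℝ) ^ p ≤ (4:ℝ) ^ p :=
      Real.rpow_le_rpow (by norm_num) (by norm_num) hppos.le
    have hCp : (0:ℝ) < C ^ p := Real.rpow_pos_of_pos hCpos p
    have h4p : (0:ℝ) < (4:ℝ) ^ p := Real.rpow_pos_of_pos (by norm_num) p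
    have hexpmono : Real.exp (2 ^ p * C ^ p * T) ≤ Real.exp ((4:ℝ) ^ p * T * C ^ p * p) := by
      apply Real.exp_le_exp.2
      have h1 : 2 ^ p * C ^ p * T ≤ (4:ℝ) ^ p * T * C ^ p := by
        have := mul_le_mul_of_nonneg_right (mul_le_mul_of_nonneg_right h24 hCp.le) hT
        linarith
      have h2 : (4:ℝ) ^ p * T * C ^ p ≤ (4:ℝ) ^ p * T * C ^ p * p := by
        nlinarith [mul_nonneg (mul_nonneg h4p.le hT) hCp.le]
      linarith
    calc 2 ^ p * C ^ p * Real.exp (2 ^ p * C ^ p * T)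
        ≤ 2 ^ p * C ^ p * Real.exp ((4:ℝ) ^ p * T * C ^ p * p) := by
          exact mul_le_mul_of_nonneg_left hexpmono (by positivity)
      _ = 2 ^ p * C ^ p * Real.exp ((4:ℝ) ^ p * T * C ^ p * p) := rfl
  have hfinal : g T ^ p ≤ R ^ p := le_trans hlim hRp
  have := (Real.rpow_le_rpow_iff (hgnonneg T hT) hRpos.le hppos).1 hfinal
  simpa [hR] using this
end

section
/- Let C₀ > 0 and let f : ℝ² → [0,∞) be measurable with f(p) ≤ C₀ for almost every p. Let ξ ∈ ℝ² with |ξ| < 1. Then there is a constant C, depending only on C₀, such that ∫_{ℝ²} f(p)/(p_0 (1 + p̂·ξ)) dp ≤ C (1 − |ξ|²)^{−2/5} (∫_{ℝ²} p_0² f(p) dp)^{2/5}. -/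
/-!
Split `ℝ²` into the disc `|p| ≤ R` and its complement. On the disc `f ≤ C₀`; in orthonormal
coordinates with `ξ = |ξ| e₁`, rationalising `(p₀ + s x)⁻¹ = (p₀ - s x) / (1 + (1 - s²) x² + y²)`
and integrating first along the variable that does not appear in the numerator bounds
`∫_{|p| ≤ R} (p₀ + p·ξ)⁻¹` by `6πR / √(1 - |ξ|²)`. Off the disc
`(p₀ + p·ξ)⁻¹ ≤ 2p₀ / (1 + (1 - |ξ|²)|p|²) ≤ 2p₀² / (R (1 + (1 - |ξ|²) R²))`, so that part is
controlled by `∫ p₀² f`. The radius `R = (∫ p₀² f)^{2/5} (1 - |ξ|²)^{1/10}` balances the two terms.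
-/

open MeasureTheory
open scoped NNReal RealInnerProductSpace

/-- `p₀ = √(1 + |p|²)` for `p ∈ ℝ²`. -/
noncomputable def pZero (p : EuclideanSpace ℝ (Fin 2)) : ℝ := Real.sqrt (1 + ‖p‖ ^ 2)

/-- `p̂ = p / p₀` for `p ∈ ℝ²`. -/
noncomputable def pHat (p : EuclideanSpace ℝ (Fin 2)) : EuclideanSpace ℝ (Fin 2) :=
  (pZero p)⁻¹ • p

open Real Set Module
open scoped ENNReal

lemma lintegral_inv_add_mul_sq {a b : ℝ} (ha : 0 < a) (hb : 0 < b) :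
    ∫⁻ x : ℝ, ENNReal.ofReal (a + b * x ^ 2)⁻¹ = ENNReal.ofReal (π / √(a * b)) := by
  have hk : 0 < √(b / a) := by positivity
  have hrescale : (fun x : ℝ => (a + b * x ^ 2)⁻¹) =
      fun x => a⁻¹ * (1 + (x * √(b / a)) ^ 2)⁻¹ := by
    funext x
    rw [mul_pow, sq_sqrt (by positivity), ← mul_inv]
    field_simp
  have hint : Integrable fun x : ℝ => (a + b * x ^ 2)⁻¹ := by
    rw [hrescale]
    exact (integrable_inv_one_add_sq.comp_mul_right' hk.ne').const_mul _
  have hval : ∫ x : ℝ, (a + b * x ^ 2)⁻¹ = π / √(a * b) := by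
    rw [hrescale, integral_const_mul, Measure.integral_comp_mul_right (fun y => (1 + y ^ 2)⁻¹),
      integral_univ_inv_one_add_sq, abs_of_pos (inv_pos.2 hk), smul_eq_mul, sqrt_mul ha.le,
      sqrt_div hb.le]
    have := sqrt_pos.2 ha
    have := sqrt_pos.2 hb
    field_simp
    linear_combination mul_self_sqrt ha.le
  rw [← hval, ofReal_integral_eq_lintegral_ofReal hint (.of_forall fun x => by positivity)]

lemma inv_sqrt_add_mul_le {s x y : ℝ} (hs : |s| ≤ 1) :
    (√(1 + (x ^ 2 + y ^ 2)) + s * x)⁻¹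
      ≤ (2 * √(1 + x ^ 2) + √(1 + y ^ 2)) / (1 + (1 - s ^ 2) * x ^ 2 + y ^ 2) := by
  set P := √(1 + (x ^ 2 + y ^ 2))
  have hP2 : P ^ 2 = 1 + (x ^ 2 + y ^ 2) := sq_sqrt (by positivity)
  have hsx : |s * x| ≤ |x| := by rw [abs_mul]; exact mul_le_of_le_one_left (abs_nonneg x) hs
  have hx : |x| ≤ √(1 + x ^ 2) := by
    rw [← sqrt_sq_eq_abs]; exact sqrt_le_sqrt (by linarith)
  have hxP : |x| < P := by
    rw [← sqrt_sq_eq_abs]; exact sqrt_lt_sqrt (sq_nonneg x) (by linarith [sq_nonneg y])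
  have hP : P ≤ √(1 + x ^ 2) + √(1 + y ^ 2) := by
    rw [sqrt_le_left (by positivity), add_sq, sq_sqrt (by positivity), sq_sqrt (by positivity)]
    nlinarith [mul_nonneg (sqrt_nonneg (1 + x ^ 2)) (sqrt_nonneg (1 + y ^ 2))]
  have hplus : 0 < P + s * x := by linarith [neg_abs_le (s * x)]
  have hminus : 0 < P - s * x := by linarith [le_abs_self (s * x)]
  have hprod : (P + s * x) * (P - s * x) = 1 + (1 - s ^ 2) * x ^ 2 + y ^ 2 := by
    linear_combination hP2
  rw [← hprod, inv_eq_one_div, div_le_div_iff₀ hplus (mul_pos hplus hminus), one_mul,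
    mul_comm _ (P + s * x)]
  exact mul_le_mul_of_nonneg_left (by linarith [neg_abs_le (s * x)]) hplus.le

lemma lintegral_sqrt_div_quadratic_le {t : ℝ} (ht : 0 < t) (ht1 : t ≤ 1) (x : ℝ) :
    ∫⁻ y : ℝ, ENNReal.ofReal (√(1 + x ^ 2) / (1 + t * x ^ 2 + y ^ 2))
      ≤ ENNReal.ofReal (π / √t) := by
  have ha : 0 < 1 + t * x ^ 2 := by positivity
  simp_rw [div_eq_mul_inv, ENNReal.ofReal_mul (sqrt_nonneg _)]
  rw [lintegral_const_mul' _ _ ENNReal.ofReal_ne_top]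
  have hslice := lintegral_inv_add_mul_sq ha one_pos
  simp only [one_mul, mul_one] at hslice
  rw [hslice, ← ENNReal.ofReal_mul (sqrt_nonneg _)]
  refine ENNReal.ofReal_le_ofReal ?_
  have hkey : √t * √(1 + x ^ 2) ≤ √(1 + t * x ^ 2) := by
    rw [← sqrt_mul ht.le]; exact sqrt_le_sqrt (by nlinarith)
  rw [← div_eq_mul_inv, mul_div_assoc', div_le_div_iff₀ (sqrt_pos.2 ha) (sqrt_pos.2 ht)]
  nlinarith [pi_pos]

lemma lintegral_sqrt_div_quadratic_eq {t : ℝ} (ht : 0 < t) (y : ℝ) :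
    ∫⁻ x : ℝ, ENNReal.ofReal (√(1 + y ^ 2) / (1 + t * x ^ 2 + y ^ 2))
      = ENNReal.ofReal (π / √t) := by
  have ha : 0 < 1 + y ^ 2 := by positivity
  have hswap : ∀ x : ℝ, 1 + t * x ^ 2 + y ^ 2 = (1 + y ^ 2) + t * x ^ 2 := fun x => by ring
  simp_rw [hswap, div_eq_mul_inv, ENNReal.ofReal_mul (sqrt_nonneg _)]
  rw [lintegral_const_mul' _ _ ENNReal.ofReal_ne_top, lintegral_inv_add_mul_sq ha ht,
    ← ENNReal.ofReal_mul (sqrt_nonneg _), sqrt_mul ha.le]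
  congr 1
  field_simp

section Fubini

variable {α β : Type*} [MeasurableSpace α] [MeasurableSpace β] {μ : Measure α} {ν : Measure β}
  [SFinite μ] [SFinite ν] {g : α × β → ℝ≥0∞} {c : ℝ≥0∞}

lemma setLIntegral_prod_univ_le (s : Set α) (h : ∀ x, ∫⁻ y, g (x, y) ∂ν ≤ c) :
    ∫⁻ z in s ×ˢ univ, g z ∂μ.prod ν ≤ c * μ s := by
  rw [← Measure.prod_restrict, Measure.restrict_univ, ← setLIntegral_const]
  exact (lintegral_prod_le g).trans (lintegral_mono h)

lemma setLIntegral_univ_prod_le (s : Set β) (h : ∀ y, ∫⁻ x, g (x, y) ∂μ ≤ c) :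
    ∫⁻ z in univ ×ˢ s, g z ∂μ.prod ν ≤ c * ν s := by
  rw [← Measure.prod_restrict, Measure.restrict_univ, ← lintegral_prod_swap,
    ← setLIntegral_const]
  exact (lintegral_prod_le _).trans (lintegral_mono h)

end Fubini

lemma setLIntegral_disk_inv_le {s R : ℝ} (hs : |s| < 1) (hR : 0 ≤ R) :
    ∫⁻ z in {z : ℝ × ℝ | z.1 ^ 2 + z.2 ^ 2 ≤ R ^ 2},
        ENNReal.ofReal (√(1 + (z.1 ^ 2 + z.2 ^ 2)) + s * z.1)⁻¹
      ≤ ENNReal.ofReal (6 * π * R / √(1 - s ^ 2)) := by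
  set t := 1 - s ^ 2
  have ht : 0 < t := by nlinarith [sq_abs s, abs_nonneg s]
  have ht1 : t ≤ 1 := sub_le_self _ (sq_nonneg s)
  set D := {z : ℝ × ℝ | z.1 ^ 2 + z.2 ^ 2 ≤ R ^ 2}
  set G₁ : ℝ × ℝ → ℝ≥0∞ := fun z =>
    ENNReal.ofReal (√(1 + z.1 ^ 2) / (1 + t * z.1 ^ 2 + z.2 ^ 2))
  set G₂ : ℝ × ℝ → ℝ≥0∞ := fun z =>
    ENNReal.ofReal (√(1 + z.2 ^ 2) / (1 + t * z.1 ^ 2 + z.2 ^ 2))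
  have hG₂ : Measurable G₂ := by fun_prop
  have hpoint : ∀ z : ℝ × ℝ,
      ENNReal.ofReal (√(1 + (z.1 ^ 2 + z.2 ^ 2)) + s * z.1)⁻¹ ≤ 2 * G₁ z + G₂ z := by
    intro z
    refine (ENNReal.ofReal_le_ofReal (inv_sqrt_add_mul_le hs.le)).trans ?_
    rw [add_div, mul_div_assoc, ← ENNReal.ofReal_ofNat 2, ← ENNReal.ofReal_mul zero_le_two]
    exact ENNReal.ofReal_add_le
  have hD₁ : D ⊆ Icc (-R) R ×ˢ univ := by
    intro z (hz : z.1 ^ 2 + z.2 ^ 2 ≤ R ^ 2)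
    exact ⟨abs_le_of_sq_le_sq' (by nlinarith [sq_nonneg z.2]) hR, trivial⟩
  have hD₂ : D ⊆ univ ×ˢ Icc (-R) R := by
    intro z (hz : z.1 ^ 2 + z.2 ^ 2 ≤ R ^ 2)
    exact ⟨trivial, abs_le_of_sq_le_sq' (by nlinarith [sq_nonneg z.1]) hR⟩
  rw [Measure.volume_eq_prod]
  calc ∫⁻ z in D, ENNReal.ofReal (√(1 + (z.1 ^ 2 + z.2 ^ 2)) + s * z.1)⁻¹ ∂volume.prod volume
      ≤ ∫⁻ z in D, 2 * G₁ z + G₂ z ∂volume.prod volume := lintegral_mono hpoint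
    _ = 2 * ∫⁻ z in D, G₁ z ∂volume.prod volume + ∫⁻ z in D, G₂ z ∂volume.prod volume := by
      rw [lintegral_add_right _ hG₂, lintegral_const_mul' _ _ ENNReal.ofNat_ne_top]
    _ ≤ 2 * (ENNReal.ofReal (π / √t) * volume (Icc (-R) R))
          + ENNReal.ofReal (π / √t) * volume (Icc (-R) R) := by
      gcongr
      · exact (lintegral_mono_set hD₁).trans
          (setLIntegral_prod_univ_le _ (lintegral_sqrt_div_quadratic_le ht ht1))
      · exact (lintegral_mono_set hD₂).trans
          (setLIntegral_univ_prod_le _ fun y => (lintegral_sqrt_div_quadratic_eq ht y).le)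
    _ = ENNReal.ofReal (6 * π * R / √t) := by
      rw [Real.volume_Icc, show R - -R = 2 * R by ring, ← ENNReal.ofReal_mul (by positivity),
        ← ENNReal.ofReal_ofNat 2, ← ENNReal.ofReal_mul zero_le_two,
        ← ENNReal.ofReal_add (by positivity) (by positivity)]
      congr 1
      ring

lemma OrthonormalBasis.exists_apply_eq {F ι : Type*} [NormedAddCommGroup F]
    [InnerProductSpace ℝ F] [FiniteDimensional ℝ F] [Fintype ι]
    (hF : finrank ℝ F = Fintype.card ι) (i : ι) {u : F} (hu : ‖u‖ = 1) :
    ∃ b : OrthonormalBasis ι ℝ F, b i = u := by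
  have hv : Orthonormal ℝ (({i} : Set ι).domRestrict fun _ => u) := by
    rw [orthonormal_iff_ite]
    rintro ⟨j, rfl⟩ ⟨k, rfl⟩
    simp [Set.domRestrict, hu]
  obtain ⟨b, hb⟩ := hv.exists_orthonormalBasis_extension_of_card_eq hF
  exact ⟨b, hb i rfl⟩

lemma exists_measurePreserving_coords {F : Type*} [NormedAddCommGroup F]
    [InnerProductSpace ℝ F] [FiniteDimensional ℝ F] [MeasurableSpace F] [BorelSpace F]
    (hF : finrank ℝ F = 2) (ξ : F) :
    ∃ T : F ≃ᵐ ℝ × ℝ, MeasurePreserving T ∧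
      ∀ p, (T p).1 ^ 2 + (T p).2 ^ 2 = ‖p‖ ^ 2 ∧ ⟪p, ξ⟫ = ‖ξ‖ * (T p).1 := by
  have : Nontrivial F := Module.nontrivial_of_finrank_pos (R := ℝ) (by omega)
  obtain ⟨u, hu, hξu⟩ : ∃ u : F, ‖u‖ = 1 ∧ ξ = ‖ξ‖ • u := by
    rcases eq_or_ne ξ 0 with rfl | hξ
    · obtain ⟨u, hu⟩ := exists_norm_eq F zero_le_one
      exact ⟨u, hu, by simp⟩
    · exact ⟨‖ξ‖⁻¹ • ξ, by simp [norm_smul, hξ], by simp [smul_smul, hξ]⟩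
  obtain ⟨b, hb⟩ := OrthonormalBasis.exists_apply_eq (hF.trans (Fintype.card_fin 2).symm) 0 hu
  refine ⟨(b.measurableEquiv.trans (MeasurableEquiv.toLp 2 (Fin 2 → ℝ)).symm).trans
      MeasurableEquiv.finTwoArrow, ?_, fun p => ⟨?_, ?_⟩⟩
  · exact (volume_preserving_finTwoArrow ℝ).comp
      ((EuclideanSpace.volume_preserving_symm_measurableEquiv_toLp (Fin 2)).comp
        b.measurePreserving_measurableEquiv)
  · rw [← b.repr.norm_map p, EuclideanSpace.norm_eq, sq_sqrt (by positivity)]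
    simp [Fin.sum_univ_two]
    rfl
  · conv_lhs => rw [hξu, real_inner_smul_right, ← hb, real_inner_comm, ← b.repr_apply_apply]
    rfl

lemma exists_pos_pow_eq {x : ℝ} (hx : 0 < x) {n : ℕ} (hn : n ≠ 0) : ∃ a > 0, x = a ^ n :=
  ⟨x ^ (n⁻¹ : ℝ), by positivity, (rpow_inv_natCast_pow hx.le hn).symm⟩

section Momentum

variable {p ξ : EuclideanSpace ℝ (Fin 2)} {C₀ : ℝ} {f : EuclideanSpace ℝ (Fin 2) → ℝ}

lemma pZero_sq (p : EuclideanSpace ℝ (Fin 2)) : pZero p ^ 2 = 1 + ‖p‖ ^ 2 :=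
  sq_sqrt (by positivity)

lemma pZero_pos (p : EuclideanSpace ℝ (Fin 2)) : 0 < pZero p :=
  sqrt_pos.2 (by positivity)

lemma one_le_pZero (p : EuclideanSpace ℝ (Fin 2)) : 1 ≤ pZero p :=
  one_le_sqrt.2 (by simp)

lemma norm_lt_pZero (p : EuclideanSpace ℝ (Fin 2)) : ‖p‖ < pZero p :=
  lt_sqrt (norm_nonneg p) |>.2 (by linarith)

lemma pZero_mul_one_add_inner_pHat (p ξ : EuclideanSpace ℝ (Fin 2)) :
    pZero p * (1 + ⟪pHat p, ξ⟫) = pZero p + ⟪p, ξ⟫ := by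
  rw [pHat, real_inner_smul_left, mul_add, mul_one, mul_inv_cancel_left₀ (pZero_pos p).ne']

lemma pZero_add_inner_pos (hξ : ‖ξ‖ ≤ 1) : 0 < pZero p + ⟪p, ξ⟫ := by
  have := norm_lt_pZero p
  have := (neg_abs_le ⟪p, ξ⟫).trans' (neg_le_neg (abs_real_inner_le_norm p ξ))
  nlinarith [norm_nonneg p]

lemma inv_pZero_add_inner_le (hξ : ‖ξ‖ ≤ 1) :
    (pZero p + ⟪p, ξ⟫)⁻¹ ≤ 2 * pZero p / (1 + (1 - ‖ξ‖ ^ 2) * ‖p‖ ^ 2) := by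
  have hD := pZero_add_inner_pos (p := p) hξ
  have hinner : ⟪p, ξ⟫ ^ 2 ≤ ‖p‖ ^ 2 * ‖ξ‖ ^ 2 := by
    rw [← mul_pow, ← sq_abs]
    exact pow_le_pow_left₀ (abs_nonneg _) (abs_real_inner_le_norm p ξ) 2
  have ht : 0 ≤ 1 - ‖ξ‖ ^ 2 := sub_nonneg.2 (pow_le_one₀ (norm_nonneg ξ) hξ)
  have hpos : 0 < 1 + (1 - ‖ξ‖ ^ 2) * ‖p‖ ^ 2 := by positivity
  -- `(p₀ + p·ξ)(p₀ - p·ξ) = 1 + |p|² - (p·ξ)²` and `p₀ - p·ξ ≤ 2 p₀`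
  rw [inv_eq_one_div, div_le_div_iff₀ hD hpos, one_mul]
  nlinarith [pZero_sq p, pZero_pos p]

lemma inv_pZero_add_inner_le_two_mul_sq (hξ : ‖ξ‖ ≤ 1) :
    (pZero p + ⟪p, ξ⟫)⁻¹ ≤ 2 * pZero p ^ 2 := by
  have ht : 0 ≤ 1 - ‖ξ‖ ^ 2 := sub_nonneg.2 (pow_le_one₀ (norm_nonneg ξ) hξ)
  refine (inv_pZero_add_inner_le hξ).trans ?_
  rw [div_le_iff₀ (by positivity)]
  nlinarith [one_le_pZero p, mul_nonneg ht (sq_nonneg ‖p‖)]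

lemma inv_pZero_add_inner_le_of_le_norm (hξ : ‖ξ‖ ≤ 1) {R : ℝ} (hR : 0 < R) (hp : R ≤ ‖p‖) :
    (pZero p + ⟪p, ξ⟫)⁻¹ ≤ 2 / (R * (1 + (1 - ‖ξ‖ ^ 2) * R ^ 2)) * pZero p ^ 2 := by
  have ht : 0 ≤ 1 - ‖ξ‖ ^ 2 := sub_nonneg.2 (pow_le_one₀ (norm_nonneg ξ) hξ)
  refine (inv_pZero_add_inner_le hξ).trans ?_
  have hRp : R * (1 + (1 - ‖ξ‖ ^ 2) * R ^ 2) ≤ pZero p * (1 + (1 - ‖ξ‖ ^ 2) * ‖p‖ ^ 2) := by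
    have hRp₀ : R ≤ pZero p := hp.trans (norm_lt_pZero p).le
    have hRp₂ : 1 + (1 - ‖ξ‖ ^ 2) * R ^ 2 ≤ 1 + (1 - ‖ξ‖ ^ 2) * ‖p‖ ^ 2 := by gcongr
    exact mul_le_mul hRp₀ hRp₂ (by positivity) (pZero_pos p).le
  rw [div_mul_eq_mul_div, div_le_div_iff₀ (by positivity) (by positivity)]
  nlinarith [pZero_pos p]

lemma setLIntegral_inv_pZero_add_inner_le (hξ : ‖ξ‖ < 1) {R : ℝ} (hR : 0 ≤ R) :
    ∫⁻ p in {p | ‖p‖ ≤ R}, ENNReal.ofReal (pZero p + ⟪p, ξ⟫)⁻¹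
      ≤ ENNReal.ofReal (6 * π * R / √(1 - ‖ξ‖ ^ 2)) := by
  obtain ⟨T, hT, hTp⟩ := exists_measurePreserving_coords finrank_euclideanSpace_fin ξ
  set D := {z : ℝ × ℝ | z.1 ^ 2 + z.2 ^ 2 ≤ R ^ 2}
  have hpre : T ⁻¹' D = {p | ‖p‖ ≤ R} := by
    ext p
    simp only [D, mem_preimage, mem_ofPred_eq, (hTp p).1]
    exact sq_le_sq₀ (norm_nonneg p) hR
  calc ∫⁻ p in {p | ‖p‖ ≤ R}, ENNReal.ofReal (pZero p + ⟪p, ξ⟫)⁻¹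
      = ∫⁻ p in T ⁻¹' D, ENNReal.ofReal
          (√(1 + ((T p).1 ^ 2 + (T p).2 ^ 2)) + ‖ξ‖ * (T p).1)⁻¹ := by
        rw [hpre]
        refine lintegral_congr fun p => ?_
        rw [(hTp p).1, ← (hTp p).2]
        rfl
    _ = ∫⁻ z in D, ENNReal.ofReal (√(1 + (z.1 ^ 2 + z.2 ^ 2)) + ‖ξ‖ * z.1)⁻¹ := by
        exact hT.setLIntegral_comp_preimage_emb T.measurableEmbedding
          (fun z => ENNReal.ofReal (√(1 + (z.1 ^ 2 + z.2 ^ 2)) + ‖ξ‖ * z.1)⁻¹) D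
    _ ≤ _ := setLIntegral_disk_inv_le (by rwa [abs_norm]) hR

lemma lintegral_div_pZero_add_inner_le_two_mul (hf : ∀ p, 0 ≤ f p) (hξ : ‖ξ‖ ≤ 1) :
    ∫⁻ p, ENNReal.ofReal (f p / (pZero p + ⟪p, ξ⟫))
      ≤ 2 * ∫⁻ p, ENNReal.ofReal (pZero p ^ 2 * f p) := by
  rw [← lintegral_const_mul' _ _ ENNReal.ofNat_ne_top]
  refine lintegral_mono fun p =>
    (ENNReal.ofReal_le_ofReal (q := 2 * (pZero p ^ 2 * f p)) ?_).trans_eq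
    (by rw [ENNReal.ofReal_mul zero_le_two, ENNReal.ofReal_ofNat])
  rw [div_eq_mul_inv, mul_comm (f p), ← mul_assoc]
  exact mul_le_mul_of_nonneg_right (inv_pZero_add_inner_le_two_mul_sq hξ) (hf p)

lemma lintegral_div_pZero_add_inner_le (hC₀ : 0 ≤ C₀) (hf : ∀ p, 0 ≤ f p)
    (hfC : ∀ᵐ p, f p ≤ C₀) (hξ : ‖ξ‖ < 1) {R : ℝ} (hR : 0 < R) :
    ∫⁻ p, ENNReal.ofReal (f p / (pZero p + ⟪p, ξ⟫))
      ≤ ENNReal.ofReal (C₀ * (6 * π * R / √(1 - ‖ξ‖ ^ 2)))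
        + ENNReal.ofReal (2 / (R * (1 + (1 - ‖ξ‖ ^ 2) * R ^ 2)))
          * ∫⁻ p, ENNReal.ofReal (pZero p ^ 2 * f p) := by
  set B := {p : EuclideanSpace ℝ (Fin 2) | ‖p‖ ≤ R}
  have hB : MeasurableSet B := measurableSet_le continuous_norm.measurable measurable_const
  rw [← lintegral_add_compl _ hB]
  gcongr
  · calc ∫⁻ p in B, ENNReal.ofReal (f p / (pZero p + ⟪p, ξ⟫))
        ≤ ∫⁻ p in B, ENNReal.ofReal C₀ * ENNReal.ofReal (pZero p + ⟪p, ξ⟫)⁻¹ := by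
          refine lintegral_mono_ae ((ae_restrict_of_ae hfC).mono fun p hp => ?_)
          rw [← ENNReal.ofReal_mul hC₀, div_eq_mul_inv]
          gcongr ENNReal.ofReal ?_
          exact mul_le_mul_of_nonneg_right hp (inv_nonneg.2 (pZero_add_inner_pos hξ.le).le)
      _ ≤ ENNReal.ofReal (C₀ * (6 * π * R / √(1 - ‖ξ‖ ^ 2))) := by
          rw [lintegral_const_mul' _ _ ENNReal.ofReal_ne_top, ENNReal.ofReal_mul hC₀]
          gcongr
          exact setLIntegral_inv_pZero_add_inner_le hξ hR.le
  · rw [← lintegral_const_mul' _ _ ENNReal.ofReal_ne_top]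
    refine (lintegral_mono_ae ((ae_restrict_mem hB.compl).mono fun p hp => ?_)).trans
      (setLIntegral_le_lintegral _ _)
    have ht : 0 ≤ 1 - ‖ξ‖ ^ 2 := sub_nonneg.2 (pow_le_one₀ (norm_nonneg ξ) hξ.le)
    rw [← ENNReal.ofReal_mul (by positivity), div_eq_mul_inv, mul_comm (f p), ← mul_assoc]
    exact ENNReal.ofReal_le_ofReal (mul_le_mul_of_nonneg_right
      (inv_pZero_add_inner_le_of_le_norm hξ.le hR (le_of_not_ge hp)) (hf p))

/- With `∫ p₀² f = a¹⁰` and `1 - |ξ|² = b¹⁰` all exponents become integral; the radius `R = a⁴ b`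
makes the ball term exactly `6πC₀ a⁴/b⁴` and, as `x ≤ 1 + x⁴` for `x = a²b³`, the tail term at
most `2 a⁴/b⁴`. -/
lemma lintegral_div_pZero_add_inner_le_of_pow_ten (hC₀ : 0 ≤ C₀) (hf : ∀ p, 0 ≤ f p)
    (hfC : ∀ᵐ p, f p ≤ C₀) (hξ : ‖ξ‖ < 1) {a b : ℝ} (ha : 0 < a) (hb : 0 < b)
    (hI : ∫⁻ p, ENNReal.ofReal (pZero p ^ 2 * f p) = ENNReal.ofReal (a ^ 10))
    (ht : 1 - ‖ξ‖ ^ 2 = b ^ 10) :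
    ∫⁻ p, ENNReal.ofReal (f p / (pZero p + ⟪p, ξ⟫))
      ≤ ENNReal.ofReal ((6 * π * C₀ + 2) * (a ^ 4 / b ^ 4)) := by
  refine (lintegral_div_pZero_add_inner_le hC₀ hf hfC hξ (R := a ^ 4 * b) (by positivity)).trans
    ?_
  rw [hI, ht, ← ENNReal.ofReal_mul (by positivity),
    ← ENNReal.ofReal_add (by positivity) (by positivity)]
  refine ENNReal.ofReal_le_ofReal ?_
  have hsqrt : √(b ^ 10) = b ^ 5 := by
    rw [show b ^ 10 = (b ^ 5) ^ 2 by ring, sqrt_sq (by positivity)]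
  have hx : a ^ 2 * b ^ 3 ≤ 1 + (a ^ 2 * b ^ 3) ^ 4 := by
    nlinarith [sq_nonneg ((a ^ 2 * b ^ 3) ^ 2 - 1 / 2), sq_nonneg (a ^ 2 * b ^ 3 - 1 / 2)]
  have hball : C₀ * (6 * π * (a ^ 4 * b) / √(b ^ 10)) = 6 * π * C₀ * (a ^ 4 / b ^ 4) := by
    rw [hsqrt]; field_simp
  have htail :
      2 / (a ^ 4 * b * (1 + b ^ 10 * (a ^ 4 * b) ^ 2)) * a ^ 10 ≤ 2 * (a ^ 4 / b ^ 4) := by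
    rw [div_mul_eq_mul_div, ← mul_div_assoc, div_le_div_iff₀ (by positivity) (by positivity)]
    nlinarith [mul_le_mul_of_nonneg_left hx (by positivity : 0 ≤ 2 * a ^ 8 * b)]
  linarith

lemma lintegral_div_pZero_add_inner_le_rpow (hC₀ : 0 ≤ C₀) (hf : ∀ p, 0 ≤ f p)
    (hfC : ∀ᵐ p, f p ≤ C₀) (hξ : ‖ξ‖ < 1) :
    ∫⁻ p, ENNReal.ofReal (f p / (pZero p + ⟪p, ξ⟫))
      ≤ ENNReal.ofReal (6 * π * C₀ + 2) * ENNReal.ofReal (1 - ‖ξ‖ ^ 2) ^ (-(2 / 5) : ℝ)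
        * (∫⁻ p, ENNReal.ofReal (pZero p ^ 2 * f p)) ^ ((2 : ℝ) / 5) := by
  set I := ∫⁻ p, ENNReal.ofReal (pZero p ^ 2 * f p)
  obtain ⟨b, hb, ht⟩ := exists_pos_pow_eq (show 0 < 1 - ‖ξ‖ ^ 2 by nlinarith [norm_nonneg ξ])
    (n := 10) (by norm_num)
  rw [ht, ENNReal.ofReal_rpow_of_pos (by positivity)]
  rcases eq_top_or_lt_top I with hI | hI
  · rw [hI, ENNReal.top_rpow_of_pos (by norm_num), ENNReal.mul_top (by positivity)]
    exact le_top
  rcases eq_or_ne I 0 with hI0 | hI0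
  · rw [hI0, ENNReal.zero_rpow_of_pos (by norm_num), mul_zero]
    calc _ ≤ 2 * I := lintegral_div_pZero_add_inner_le_two_mul hf hξ.le
      _ = 0 := by rw [hI0, mul_zero]
  obtain ⟨a, ha, hIa⟩ := exists_pos_pow_eq (ENNReal.toReal_pos hI0 hI.ne) (n := 10) (by norm_num)
  have hIa' : I = ENNReal.ofReal (a ^ 10) := by rw [← hIa, ENNReal.ofReal_toReal hI.ne]
  refine (lintegral_div_pZero_add_inner_le_of_pow_ten hC₀ hf hfC hξ ha hb hIa' ht).trans_eq ?_
  rw [hIa', ENNReal.ofReal_rpow_of_pos (by positivity), ← ENNReal.ofReal_mul (by positivity),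
    ← ENNReal.ofReal_mul (by positivity)]
  congr 1
  have hb4 : (b ^ 10) ^ (-(2 / 5) : ℝ) = (b ^ 4)⁻¹ := by
    rw [← rpow_natCast, ← rpow_mul hb.le]; norm_num
  have ha4 : (a ^ 10) ^ ((2 : ℝ) / 5) = a ^ 4 := by
    rw [← rpow_natCast, ← rpow_mul ha.le]; norm_num
  rw [hb4, ha4]
  ring

end Momentum

/-- **Momentum-singularity estimate, first form** (Lemma 5.2, estimate (5.1)).
For `f : ℝ² → [0,∞)` measurable with `f ≤ C₀` a.e. and `|ξ| < 1`, there is a constant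
`C = C(C₀)` with
`∫ f(p)/(p₀(1+p̂·ξ)) dp ≤ C (1−|ξ|²)^{−2/5} (∫ p₀² f dp)^{2/5}`. -/
theorem singularity_estimate_one (C₀ : ℝ) (hC₀ : 0 < C₀) :
    ∃ C : ℝ≥0, 0 < C ∧
      ∀ (f : EuclideanSpace ℝ (Fin 2) → ℝ),
        Measurable f → (∀ p, 0 ≤ f p) →
        (∀ᵐ p : EuclideanSpace ℝ (Fin 2), f p ≤ C₀) →
        ∀ (ξ : EuclideanSpace ℝ (Fin 2)), ‖ξ‖ < 1 →
          (∫⁻ p, ENNReal.ofReal (f p / (pZero p * (1 + ⟪pHat p, ξ⟫))))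
            ≤ C * ENNReal.ofReal (1 - ‖ξ‖ ^ 2) ^ (-(2 / 5) : ℝ)
              * (∫⁻ p, ENNReal.ofReal (pZero p ^ 2 * f p)) ^ ((2 : ℝ) / 5) := by
  refine ⟨(6 * π * C₀ + 2).toNNReal, by positivity, fun f _ hf hfC ξ hξ => ?_⟩
  simp_rw [pZero_mul_one_add_inner_pHat, ENNReal.ofNNReal_toNNReal]
  exact lintegral_div_pZero_add_inner_le_rpow hC₀.le hf hfC hξ
end

section
/- Let δ > 0 and C₀ > 0, and let g : ℝ² × ℝ³ → [0,∞) be measurable such that sup_{x ∈ ℝ², (p₁,p₂) ∈ ℝ²} ∫_ℝ g(x, p₁, p₂, p₃) ⟨p₃⟩^{5+δ} dp₃ ≤ C₀. Let M, S be real numbers with min{M, 5+δ} ≥ S > −2. Then there is a constant C, depending only on C₀, S, M and δ, such that ‖p_0^S g‖_{L^{(M+2)/(S+2)}_x L^1_p} ≤ C ‖p_0^M g‖_{L^1_x L^1_p}^{(S+2)/(M+2)}. -/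
/-!
Fix `x` and split momentum space along the square cylinder `|p₁|, |p₂| ≤ R`. Outside it
`p₀ ≥ R`, so `p₀^S ≤ R^(S-M) p₀^M`. Inside it, `p₀^S` is dominated by
`⟨p₁⟩^a ⟨p₂⟩^a ⟨p₃⟩^(5+δ)` times a power of `R` (with `a = 0` if `S ≥ 0` and `a = S/2 > -1`
otherwise); the `p₃`-integral is then bounded by `C₀` and the `(p₁, p₂)`-integral over the
square by `O(R^(S+2))`. Taking `R = (∫ p₀^M g dp)^(1/(M+2))` balances the two pieces, giving
`∫ p₀^S g dp ≲ (∫ p₀^M g dp)^((S+2)/(M+2))` for each `x`; raising this to the power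
`(M+2)/(S+2)` and integrating in `x` yields the claim.
-/

open MeasureTheory
open scoped NNReal ENNReal

/-- `p₀ = √(1 + |p|²)` for `p ∈ ℝ³`. -/
noncomputable def pZero3 (p : EuclideanSpace ℝ (Fin 3)) : ℝ := Real.sqrt (1 + ‖p‖ ^ 2)

/-- The vector `(p₁, p₂, p₃) ∈ ℝ³`. -/
noncomputable def vec3 (p₁ p₂ p₃ : ℝ) : EuclideanSpace ℝ (Fin 3) :=
  (EuclideanSpace.equiv (Fin 3) ℝ).symm ![p₁, p₂, p₃]

open Set

lemma pZero3_vec3 (p₁ p₂ p₃ : ℝ) :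
    pZero3 (vec3 p₁ p₂ p₃) = √(1 + p₁ ^ 2 + p₂ ^ 2 + p₃ ^ 2) := by
  rw [pZero3, EuclideanSpace.norm_eq, Real.sq_sqrt (by positivity)]
  simp [vec3, Fin.sum_univ_three, add_assoc]

lemma one_le_pZero3 (p : EuclideanSpace ℝ (Fin 3)) : 1 ≤ pZero3 p :=
  Real.one_le_sqrt.mpr (by nlinarith [sq_nonneg ‖p‖])

lemma abs_apply_le_pZero3 (p : EuclideanSpace ℝ (Fin 3)) (i : Fin 3) : |p i| ≤ pZero3 p :=
  calc |p i| = ‖p i‖ := (Real.norm_eq_abs _).symm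
    _ ≤ ‖p‖ := PiLp.norm_apply_le p i
    _ ≤ pZero3 p := Real.le_sqrt_of_sq_le (by linarith)

lemma measurable_pZero3_rpow (s : ℝ) : Measurable fun p => pZero3 p ^ s := by
  unfold pZero3; fun_prop

lemma lintegral_euclideanSpace_fin_three {φ : EuclideanSpace ℝ (Fin 3) → ℝ≥0∞}
    (hφ : Measurable φ) :
    ∫⁻ p, φ p = ∫⁻ p₁, ∫⁻ p₂, ∫⁻ p₃, φ (vec3 p₁ p₂ p₃) := by
  let e : EuclideanSpace ℝ (Fin 3) ≃ᵐ ℝ × ℝ × ℝ :=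
    (MeasurableEquiv.toLp 2 (Fin 3 → ℝ)).symm.trans
      ((MeasurableEquiv.piFinSuccAbove (fun _ => ℝ) 0).trans
        (MeasurableEquiv.prodCongr (MeasurableEquiv.refl ℝ) MeasurableEquiv.finTwoArrow))
  have he : MeasurePreserving e :=
    (EuclideanSpace.volume_preserving_symm_measurableEquiv_toLp (Fin 3)).trans
      ((volume_preserving_piFinSuccAbove (fun _ => ℝ) 0).trans
        ((MeasurePreserving.id volume).prod (volume_preserving_finTwoArrow ℝ)))
  have he_symm : (fun z : ℝ × ℝ × ℝ => φ (vec3 z.1 z.2.1 z.2.2)) = φ ∘ e.symm := by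
    ext z; congr 1; ext i; fin_cases i <;> rfl
  have hmeas : Measurable fun z : ℝ × ℝ × ℝ => φ (vec3 z.1 z.2.1 z.2.2) :=
    he_symm ▸ hφ.comp e.symm.measurable
  rw [← he.symm.lintegral_comp_emb e.symm.measurableEmbedding, ← Function.comp_def, ← he_symm,
    Measure.volume_eq_prod, lintegral_prod _ hmeas.aemeasurable]
  exact lintegral_congr fun p₁ => lintegral_prod (fun y : ℝ × ℝ => φ (vec3 p₁ y.1 y.2))
    (hmeas.comp measurable_prodMk_left).aemeasurable

lemma setLIntegral_Icc_neg_le_two_mul {f : ℝ → ℝ≥0∞} (hf : ∀ t, f (-t) = f t) (R : ℝ) :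
    ∫⁻ t in Icc (-R) R, f t ≤ 2 * ∫⁻ t in Icc 0 R, f t := by
  have hneg : ∫⁻ t in Icc (-R) 0, f t = ∫⁻ t in Icc 0 R, f t := by
    rw [← lintegral_indicator measurableSet_Icc, ← lintegral_indicator measurableSet_Icc,
      ← lintegral_neg_eq_self]
    congr 1 with t
    simp only [indicator, mem_Icc, hf, neg_le_neg_iff, neg_nonpos]
    grind
  calc ∫⁻ t in Icc (-R) R, f t ≤ ∫⁻ t in Icc (-R) 0 ∪ Icc 0 R, f t :=
        lintegral_mono_set fun t ⟨h₁, h₂⟩ => (le_total t 0).imp (⟨h₁, ·⟩) (⟨·, h₂⟩)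
    _ ≤ (∫⁻ t in Icc (-R) 0, f t) + ∫⁻ t in Icc 0 R, f t := lintegral_union_le _ _ _
    _ = 2 * ∫⁻ t in Icc 0 R, f t := by rw [hneg, two_mul]

lemma setLIntegral_Ioc_rpow {a R : ℝ} (ha : -1 < a) (hR : 0 ≤ R) :
    ∫⁻ t in Ioc 0 R, ENNReal.ofReal (t ^ a) = ENNReal.ofReal (R ^ (a + 1) / (a + 1)) := by
  rw [← ofReal_integral_eq_lintegral_ofReal
      (intervalIntegral.intervalIntegrable_rpow' ha).1
      ((ae_restrict_mem measurableSet_Ioc).mono fun t ht => Real.rpow_nonneg ht.1.le a),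
    ← intervalIntegral.integral_of_le hR, integral_rpow (Or.inl ha),
    Real.zero_rpow (by linarith), sub_zero]

lemma setLIntegral_Icc_sqrt_one_add_sq_rpow_le {a R : ℝ} (ha : -1 < a) (ha₀ : a ≤ 0)
    (hR : 0 ≤ R) :
    ∫⁻ t in Icc (-R) R, ENNReal.ofReal (√(1 + t ^ 2) ^ a)
      ≤ 2 * ENNReal.ofReal (R ^ (a + 1) / (a + 1)) := by
  refine (setLIntegral_Icc_neg_le_two_mul (fun t => by rw [neg_sq]) R).trans ?_
  rw [← setLIntegral_Ioc_rpow ha hR, Measure.restrict_congr_set Ioc_ae_eq_Icc.symm]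
  gcongr 2 * ?_
  refine setLIntegral_mono (by fun_prop) fun t ht => ?_
  refine ENNReal.ofReal_le_ofReal (Real.rpow_le_rpow_of_nonpos ht.1 ?_ ha₀)
  exact Real.le_sqrt_of_sq_le (by linarith)

lemma pZero3_vec3_rpow_le_of_nonneg {S k R p₁ p₂ p₃ : ℝ} (hS : 0 ≤ S) (hSk : S ≤ k)
    (hR : 1 ≤ R) (h₁ : |p₁| ≤ R) (h₂ : |p₂| ≤ R) :
    pZero3 (vec3 p₁ p₂ p₃) ^ S ≤ (√3 * R) ^ S * √(1 + p₃ ^ 2) ^ k := by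
  have hR₀ : 0 ≤ R := zero_le_one.trans hR
  have h₁' : p₁ ^ 2 ≤ R ^ 2 := sq_le_sq' (abs_le.mp h₁).1 (abs_le.mp h₁).2
  have h₂' : p₂ ^ 2 ≤ R ^ 2 := sq_le_sq' (abs_le.mp h₂).1 (abs_le.mp h₂).2
  have hle : pZero3 (vec3 p₁ p₂ p₃) ≤ √3 * R * √(1 + p₃ ^ 2) := by
    rw [pZero3_vec3, ← Real.sqrt_sq hR₀, ← Real.sqrt_mul (by norm_num),
      ← Real.sqrt_mul (by positivity)]
    refine Real.sqrt_le_sqrt ?_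
    nlinarith [sq_nonneg p₃, mul_le_mul_of_nonneg_right (show 1 + p₁ ^ 2 + p₂ ^ 2 ≤ 3 * R ^ 2
      by nlinarith) (sq_nonneg p₃)]
  have h₃ : 1 ≤ √(1 + p₃ ^ 2) := Real.one_le_sqrt.mpr (by nlinarith)
  calc pZero3 (vec3 p₁ p₂ p₃) ^ S ≤ (√3 * R * √(1 + p₃ ^ 2)) ^ S :=
        Real.rpow_le_rpow (by unfold pZero3; positivity) hle hS
    _ = (√3 * R) ^ S * √(1 + p₃ ^ 2) ^ S := Real.mul_rpow (by positivity) (by positivity)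
    _ ≤ (√3 * R) ^ S * √(1 + p₃ ^ 2) ^ k := by gcongr

lemma pZero3_vec3_rpow_le_of_nonpos {S k : ℝ} (hS : S ≤ 0) (hk : 0 ≤ k) (p₁ p₂ p₃ : ℝ) :
    pZero3 (vec3 p₁ p₂ p₃) ^ S
      ≤ √(1 + p₁ ^ 2) ^ (S / 2) * √(1 + p₂ ^ 2) ^ (S / 2) * √(1 + p₃ ^ 2) ^ k := by
  have hle : √(1 + p₁ ^ 2) * √(1 + p₂ ^ 2) ≤ pZero3 (vec3 p₁ p₂ p₃) ^ 2 := by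
    rw [pZero3_vec3, Real.sq_sqrt (by positivity), ← Real.sqrt_mul (by positivity)]
    refine Real.sqrt_le_iff.mpr ⟨by positivity, ?_⟩
    nlinarith [sq_nonneg p₁, sq_nonneg p₂, sq_nonneg p₃]
  have h₃ : 1 ≤ √(1 + p₃ ^ 2) ^ k := Real.one_le_rpow (Real.one_le_sqrt.mpr (by nlinarith)) hk
  calc pZero3 (vec3 p₁ p₂ p₃) ^ S = (pZero3 (vec3 p₁ p₂ p₃) ^ 2) ^ (S / 2) := by
        rw [← Real.rpow_natCast, ← Real.rpow_mul (by unfold pZero3; positivity)]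
        ring_nf
    _ ≤ (√(1 + p₁ ^ 2) * √(1 + p₂ ^ 2)) ^ (S / 2) :=
        Real.rpow_le_rpow_of_nonpos (by positivity) hle (by linarith)
    _ = √(1 + p₁ ^ 2) ^ (S / 2) * √(1 + p₂ ^ 2) ^ (S / 2) :=
        Real.mul_rpow (by positivity) (by positivity)
    _ ≤ _ := le_mul_of_one_le_right (by positivity) h₃

def squareCylinder (R : ℝ) : Set (EuclideanSpace ℝ (Fin 3)) :=
  {p | p 0 ∈ Icc (-R) R ∧ p 1 ∈ Icc (-R) R}

lemma measurableSet_squareCylinder (R : ℝ) : MeasurableSet (squareCylinder R) := by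
  unfold squareCylinder; measurability

lemma lintegral_pZero3_vec3_rpow_mul_le {S k a κ p₁ p₂ : ℝ} {C₀ : ℝ≥0∞}
    {f : EuclideanSpace ℝ (Fin 3) → ℝ≥0∞}
    (hbound : ∀ p₃, pZero3 (vec3 p₁ p₂ p₃) ^ S
      ≤ κ * (√(1 + p₁ ^ 2) ^ a * √(1 + p₂ ^ 2) ^ a * √(1 + p₃ ^ 2) ^ k))
    (hC₀ : ∫⁻ p₃, f (vec3 p₁ p₂ p₃) * ENNReal.ofReal (√(1 + p₃ ^ 2) ^ k) ≤ C₀) :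
    ∫⁻ p₃, ENNReal.ofReal (pZero3 (vec3 p₁ p₂ p₃) ^ S) * f (vec3 p₁ p₂ p₃)
      ≤ ENNReal.ofReal κ * C₀
        * (ENNReal.ofReal (√(1 + p₁ ^ 2) ^ a) * ENNReal.ofReal (√(1 + p₂ ^ 2) ^ a)) := by
  set c := ENNReal.ofReal κ
    * (ENNReal.ofReal (√(1 + p₁ ^ 2) ^ a) * ENNReal.ofReal (√(1 + p₂ ^ 2) ^ a))
  have hpt : ∀ p₃, ENNReal.ofReal (pZero3 (vec3 p₁ p₂ p₃) ^ S) * f (vec3 p₁ p₂ p₃)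
      ≤ c * (f (vec3 p₁ p₂ p₃) * ENNReal.ofReal (√(1 + p₃ ^ 2) ^ k)) := fun p₃ =>
    calc ENNReal.ofReal (pZero3 (vec3 p₁ p₂ p₃) ^ S) * f (vec3 p₁ p₂ p₃)
        ≤ ENNReal.ofReal (κ * (√(1 + p₁ ^ 2) ^ a * √(1 + p₂ ^ 2) ^ a * √(1 + p₃ ^ 2) ^ k))
          * f (vec3 p₁ p₂ p₃) := by gcongr; exact hbound p₃
      _ = c * (f (vec3 p₁ p₂ p₃) * ENNReal.ofReal (√(1 + p₃ ^ 2) ^ k)) := by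
          rw [← mul_assoc, ← mul_assoc, ENNReal.ofReal_mul' (by positivity),
            ENNReal.ofReal_mul' (by positivity), ENNReal.ofReal_mul' (by positivity)]
          ring
  calc ∫⁻ p₃, ENNReal.ofReal (pZero3 (vec3 p₁ p₂ p₃) ^ S) * f (vec3 p₁ p₂ p₃)
      ≤ c * ∫⁻ p₃, f (vec3 p₁ p₂ p₃) * ENNReal.ofReal (√(1 + p₃ ^ 2) ^ k) := by
        rw [← lintegral_const_mul' _ _ (by simp [c, ENNReal.mul_eq_top])]
        exact lintegral_mono hpt
    _ ≤ c * C₀ := by gcongr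
    _ = _ := by ring

lemma setLIntegral_squareCylinder_le {S k a κ R : ℝ} {C₀ : ℝ≥0∞} (ha : -1 < a) (ha₀ : a ≤ 0)
    (hR : 0 ≤ R)
    (hbound : ∀ p₁ ∈ Icc (-R) R, ∀ p₂ ∈ Icc (-R) R, ∀ p₃, pZero3 (vec3 p₁ p₂ p₃) ^ S
      ≤ κ * (√(1 + p₁ ^ 2) ^ a * √(1 + p₂ ^ 2) ^ a * √(1 + p₃ ^ 2) ^ k))
    {f : EuclideanSpace ℝ (Fin 3) → ℝ≥0∞} (hf : Measurable f)
    (hC₀ : ∀ p₁ p₂, ∫⁻ p₃, f (vec3 p₁ p₂ p₃) * ENNReal.ofReal (√(1 + p₃ ^ 2) ^ k) ≤ C₀) :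
    ∫⁻ p in squareCylinder R, ENNReal.ofReal (pZero3 p ^ S) * f p
      ≤ ENNReal.ofReal (κ * (2 * (R ^ (a + 1) / (a + 1))) ^ 2) * C₀ := by
  set w : ℝ → ℝ≥0∞ := fun t => ENNReal.ofReal (√(1 + t ^ 2) ^ a)
  set d : ℝ → ℝ≥0∞ := (Icc (-R) R).indicator w
  have hd : Measurable d := (by fun_prop : Measurable w).indicator measurableSet_Icc
  have hfiber : ∀ p₁ p₂, ∫⁻ p₃, (squareCylinder R).indicator
      (fun p => ENNReal.ofReal (pZero3 p ^ S) * f p) (vec3 p₁ p₂ p₃)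
        ≤ ENNReal.ofReal κ * C₀ * (d p₁ * d p₂) := by
    intro p₁ p₂
    by_cases hp : p₁ ∈ Icc (-R) R ∧ p₂ ∈ Icc (-R) R
    · have hmem : ∀ p₃, vec3 p₁ p₂ p₃ ∈ squareCylinder R := fun _ => hp
      simp only [indicator_of_mem (hmem _), d, indicator_of_mem hp.1, indicator_of_mem hp.2]
      exact lintegral_pZero3_vec3_rpow_mul_le (hbound p₁ hp.1 p₂ hp.2) (hC₀ p₁ p₂)
    · have hmem : ∀ p₃, vec3 p₁ p₂ p₃ ∉ squareCylinder R := fun _ => hp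
      simp [indicator_of_notMem (hmem _)]
  have hF : Measurable fun p => ENNReal.ofReal (pZero3 p ^ S) * f p :=
    (measurable_pZero3_rpow S).ennreal_ofReal.mul hf
  calc ∫⁻ p in squareCylinder R, ENNReal.ofReal (pZero3 p ^ S) * f p
      = ∫⁻ p₁, ∫⁻ p₂, ∫⁻ p₃, (squareCylinder R).indicator
          (fun p => ENNReal.ofReal (pZero3 p ^ S) * f p) (vec3 p₁ p₂ p₃) := by
        rw [← lintegral_indicator (measurableSet_squareCylinder R),
          lintegral_euclideanSpace_fin_three (hF.indicator (measurableSet_squareCylinder R))]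
    _ ≤ ∫⁻ p₁, ∫⁻ p₂, ENNReal.ofReal κ * C₀ * (d p₁ * d p₂) :=
        lintegral_mono fun p₁ => lintegral_mono fun p₂ => hfiber p₁ p₂
    _ = ENNReal.ofReal κ * C₀ * ((∫⁻ t, d t) * ∫⁻ t, d t) := by
        simp_rw [← mul_assoc, lintegral_const_mul _ hd]
        rw [lintegral_mul_const _ (hd.const_mul _), lintegral_const_mul _ hd, mul_assoc]
    _ ≤ ENNReal.ofReal κ * C₀ * ((2 * ENNReal.ofReal (R ^ (a + 1) / (a + 1)))
          * (2 * ENNReal.ofReal (R ^ (a + 1) / (a + 1)))) := by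
        have hI : ∫⁻ t, d t ≤ 2 * ENNReal.ofReal (R ^ (a + 1) / (a + 1)) := by
          rw [lintegral_indicator measurableSet_Icc]
          exact setLIntegral_Icc_sqrt_one_add_sq_rpow_le ha ha₀ hR
        gcongr
    _ = ENNReal.ofReal (κ * (2 * (R ^ (a + 1) / (a + 1))) ^ 2) * C₀ := by
        have ha₁ : 0 < a + 1 := by linarith
        rw [ENNReal.ofReal_mul' (by positivity), ENNReal.ofReal_pow (by positivity),
          ENNReal.ofReal_mul zero_le_two, ENNReal.ofReal_ofNat]
        ring

lemma exists_setLIntegral_squareCylinder_le {S k : ℝ} (hS : -2 < S) (hSk : S ≤ k) (hk : 0 ≤ k) :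
    ∃ K : ℝ, ∀ R, 1 ≤ R → ∀ {f : EuclideanSpace ℝ (Fin 3) → ℝ≥0∞}, Measurable f →
      ∀ {C₀ : ℝ≥0∞},
        (∀ p₁ p₂, ∫⁻ p₃, f (vec3 p₁ p₂ p₃) * ENNReal.ofReal (√(1 + p₃ ^ 2) ^ k) ≤ C₀) →
        ∫⁻ p in squareCylinder R, ENNReal.ofReal (pZero3 p ^ S) * f p
          ≤ ENNReal.ofReal (K * R ^ (S + 2)) * C₀ := by
  rcases le_total 0 S with hS₀ | hS₀
  · refine ⟨4 * √3 ^ S, fun R hR f hf C₀ hC₀ => ?_⟩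
    have hR₀ : 0 < R := zero_lt_one.trans_le hR
    refine (setLIntegral_squareCylinder_le (a := 0) (κ := (√3 * R) ^ S) (by norm_num) le_rfl
      hR₀.le (fun p₁ hp₁ p₂ hp₂ p₃ => ?_) hf hC₀).trans_eq ?_
    · simpa using pZero3_vec3_rpow_le_of_nonneg hS₀ hSk hR (abs_le.mpr hp₁) (abs_le.mpr hp₂)
    · congr 2
      rw [Real.mul_rpow (by positivity) hR₀.le, Real.rpow_add hR₀ S 2, Real.rpow_two]
      norm_num
      ring
  · refine ⟨(4 / (S + 2)) ^ 2, fun R hR f hf C₀ hC₀ => ?_⟩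
    have hR₀ : 0 < R := zero_lt_one.trans_le hR
    refine (setLIntegral_squareCylinder_le (a := S / 2) (κ := 1) (by linarith) (by linarith)
      hR₀.le (fun p₁ _ p₂ _ p₃ => ?_) hf hC₀).trans_eq ?_
    · simpa using pZero3_vec3_rpow_le_of_nonpos hS₀ hk p₁ p₂ p₃
    · have hpow : (R ^ (S / 2 + 1)) ^ 2 = R ^ (S + 2) := by
        rw [← Real.rpow_natCast, ← Real.rpow_mul hR₀.le]
        ring_nf
      have hS₂ : S + 2 ≠ 0 := by linarith
      congr 2
      rw [mul_pow, div_pow, hpow]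
      field_simp
      ring

lemma rpow_le_rpow_sub_mul_rpow {x R S M : ℝ} (hR : 0 < R) (hRx : R ≤ x) (hSM : S ≤ M) :
    x ^ S ≤ R ^ (S - M) * x ^ M := by
  have hx : 0 < x := hR.trans_le hRx
  calc x ^ S = x ^ (S - M) * x ^ M := by rw [← Real.rpow_add hx, sub_add_cancel]
    _ ≤ R ^ (S - M) * x ^ M :=
        mul_le_mul_of_nonneg_right (Real.rpow_le_rpow_of_nonpos hR hRx (by linarith))
          (by positivity)

lemma le_pZero3_of_notMem_squareCylinder {R : ℝ} {p : EuclideanSpace ℝ (Fin 3)}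
    (hp : p ∉ squareCylinder R) : R ≤ pZero3 p := by
  simp only [squareCylinder, mem_ofPred_eq, mem_Icc, ← abs_le, not_and_or, not_le] at hp
  rcases hp with hp | hp
  · exact hp.le.trans (abs_apply_le_pZero3 p 0)
  · exact hp.le.trans (abs_apply_le_pZero3 p 1)

lemma setLIntegral_compl_squareCylinder_le {S M R : ℝ} (hSM : S ≤ M) (hR : 0 < R)
    (f : EuclideanSpace ℝ (Fin 3) → ℝ≥0∞) :
    ∫⁻ p in (squareCylinder R)ᶜ, ENNReal.ofReal (pZero3 p ^ S) * f p
      ≤ ENNReal.ofReal (R ^ (S - M)) * ∫⁻ p, ENNReal.ofReal (pZero3 p ^ M) * f p :=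
  calc ∫⁻ p in (squareCylinder R)ᶜ, ENNReal.ofReal (pZero3 p ^ S) * f p
      ≤ ∫⁻ p in (squareCylinder R)ᶜ, ENNReal.ofReal (R ^ (S - M)) *
          (ENNReal.ofReal (pZero3 p ^ M) * f p) := by
        refine setLIntegral_mono' (measurableSet_squareCylinder R).compl fun p hp => ?_
        rw [← mul_assoc, ← ENNReal.ofReal_mul (by positivity)]
        gcongr
        exact rpow_le_rpow_sub_mul_rpow hR (le_pZero3_of_notMem_squareCylinder hp) hSM
    _ ≤ ENNReal.ofReal (R ^ (S - M)) * ∫⁻ p, ENNReal.ofReal (pZero3 p ^ M) * f p := by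
        rw [lintegral_const_mul' _ _ ENNReal.ofReal_ne_top]
        gcongr
        exact Measure.restrict_le_self

lemma le_add_one_mul_rpow_of_forall_le {s m : ℝ} (hs : 0 < s) (hsm : s ≤ m) {F B c : ℝ≥0∞}
    (hFB : F ≤ B)
    (h : ∀ R : ℝ, 1 ≤ R → F ≤ c * ENNReal.ofReal (R ^ s) + ENNReal.ofReal (R ^ (s - m)) * B) :
    F ≤ (c + 1) * B ^ (s / m) := by
  have hm : 0 < m := hs.trans_le hsm
  have hθ : 0 < s / m := div_pos hs hm
  rcases le_or_gt B 1 with hB | hB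
  · calc F ≤ B ^ (1 : ℝ) := by rwa [ENNReal.rpow_one]
      _ ≤ B ^ (s / m) := ENNReal.rpow_le_rpow_of_exponent_ge hB ((div_le_one hm).mpr hsm)
      _ ≤ (c + 1) * B ^ (s / m) := le_mul_of_one_le_left' le_add_self
  rcases eq_or_ne B ⊤ with rfl | hB_top
  · simp [ENNReal.top_rpow_of_pos hθ]
  -- the radius `R = B ^ (1 / m)` makes both terms equal to `B ^ (s / m)`
  set b := B.toReal
  have hb : 1 < b := by simpa [b] using (ENNReal.toReal_lt_toReal ENNReal.one_ne_top hB_top).mpr hB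
  have hb₀ : 0 < b := one_pos.trans hb
  have hBb : B = ENNReal.ofReal b := (ENNReal.ofReal_toReal hB_top).symm
  have hBθ : B ^ (s / m) = ENNReal.ofReal (b ^ (s / m)) := by
    rw [hBb, ENNReal.ofReal_rpow_of_pos hb₀]
  have hR : 1 ≤ b ^ (1 / m) := Real.one_le_rpow hb.le (by positivity)
  have h₁ : (b ^ (1 / m)) ^ s = b ^ (s / m) := by rw [← Real.rpow_mul hb₀.le]; ring_nf
  have h₂ : (b ^ (1 / m)) ^ (s - m) * b = b ^ (s / m) := by
    rw [← Real.rpow_mul hb₀.le, ← Real.rpow_add_one hb₀.ne']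
    congr 1
    field_simp
    ring
  calc F ≤ c * ENNReal.ofReal ((b ^ (1 / m)) ^ s)
        + ENNReal.ofReal ((b ^ (1 / m)) ^ (s - m)) * B := h _ hR
    _ = (c + 1) * B ^ (s / m) := by
        rw [h₁, hBθ, hBb, ← ENNReal.ofReal_mul (by positivity), h₂, add_mul, one_mul]

lemma rpow_lintegral_rpow_le_mul_rpow_lintegral {α : Type*} [MeasurableSpace α] {μ : Measure α}
    {F B : α → ℝ≥0∞} {C : ℝ≥0∞} (hC : C ≠ ⊤) {q θ : ℝ} (hθ : 0 < θ) (hqθ : q * θ = 1)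
    (h : ∀ x, F x ≤ C * B x ^ θ) :
    (∫⁻ x, F x ^ q ∂μ) ^ θ ≤ C * (∫⁻ x, B x ∂μ) ^ θ := by
  have hq : 0 < q := by nlinarith
  calc (∫⁻ x, F x ^ q ∂μ) ^ θ ≤ (∫⁻ x, C ^ q * B x ∂μ) ^ θ := by
        gcongr with x
        calc F x ^ q ≤ (C * B x ^ θ) ^ q := by gcongr; exact h x
          _ = C ^ q * B x := by
            rw [ENNReal.mul_rpow_of_nonneg _ _ hq.le, ← ENNReal.rpow_mul, mul_comm θ, hqθ,
              ENNReal.rpow_one]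
    _ = C * (∫⁻ x, B x ∂μ) ^ θ := by
        rw [lintegral_const_mul' _ _ (ENNReal.rpow_ne_top_of_nonneg hq.le hC),
          ENNReal.mul_rpow_of_nonneg _ _ hθ.le, ← ENNReal.rpow_mul, hqθ, ENNReal.rpow_one]

theorem exists_lintegral_pZero3_rpow_mul_le {k S M : ℝ} (hk : 0 ≤ k) (hS : -2 < S)
    (hSk : S ≤ k) (hSM : S ≤ M) (C₀ : ℝ≥0) :
    ∃ C : ℝ≥0, 0 < C ∧ ∀ f : EuclideanSpace ℝ (Fin 3) → ℝ≥0∞, Measurable f →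
      (∀ p₁ p₂, ∫⁻ p₃, f (vec3 p₁ p₂ p₃) * ENNReal.ofReal (√(1 + p₃ ^ 2) ^ k) ≤ C₀) →
      ∫⁻ p, ENNReal.ofReal (pZero3 p ^ S) * f p
        ≤ C * (∫⁻ p, ENNReal.ofReal (pZero3 p ^ M) * f p) ^ ((S + 2) / (M + 2)) := by
  obtain ⟨K, hK⟩ := exists_setLIntegral_squareCylinder_le hS hSk hk
  refine ⟨K.toNNReal * C₀ + 1, add_pos_of_nonneg_of_pos zero_le one_pos, fun f hf hC₀ => ?_⟩
  have hSM' : ∫⁻ p, ENNReal.ofReal (pZero3 p ^ S) * f p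
      ≤ ∫⁻ p, ENNReal.ofReal (pZero3 p ^ M) * f p :=
    lintegral_mono fun p => by
      gcongr
      exact one_le_pZero3 p
  rw [ENNReal.coe_add, ENNReal.coe_mul, ENNReal.coe_one,
    show (K.toNNReal : ℝ≥0∞) = .ofReal K from rfl]
  refine le_add_one_mul_rpow_of_forall_le (by linarith) (by linarith) hSM' fun R hR => ?_
  calc ∫⁻ p, ENNReal.ofReal (pZero3 p ^ S) * f p
      = (∫⁻ p in squareCylinder R, ENNReal.ofReal (pZero3 p ^ S) * f p)
        + ∫⁻ p in (squareCylinder R)ᶜ, ENNReal.ofReal (pZero3 p ^ S) * f p :=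
        (lintegral_add_compl _ (measurableSet_squareCylinder R)).symm
    _ ≤ ENNReal.ofReal (K * R ^ (S + 2)) * C₀
        + ENNReal.ofReal (R ^ (S - M)) * ∫⁻ p, ENNReal.ofReal (pZero3 p ^ M) * f p :=
        add_le_add (hK R hR hf hC₀) (setLIntegral_compl_squareCylinder_le hSM (by linarith) f)
    _ = _ := by
        rw [show S + 2 - (M + 2) = S - M by ring, ENNReal.ofReal_mul' (by positivity)]
        ring

theorem improved_interpolation_2_5d_general (δ C₀ M S : ℝ) (hδ : 0 < δ)
    (hSM : S ≤ M) (hSδ : S ≤ 5 + δ) (hS : -2 < S) :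
    ∃ C : ℝ≥0, 0 < C ∧
      ∀ (g : EuclideanSpace ℝ (Fin 2) → EuclideanSpace ℝ (Fin 3) → ℝ),
        Measurable (Function.uncurry g) →
        (∀ x p, 0 ≤ g x p) →
        (∀ (x : EuclideanSpace ℝ (Fin 2)) (p₁ p₂ : ℝ),
          (∫⁻ p₃ : ℝ, ENNReal.ofReal
              (g x (vec3 p₁ p₂ p₃) * Real.sqrt (1 + p₃ ^ 2) ^ (5 + δ)))
            ≤ ENNReal.ofReal C₀) →
        (∫⁻ x, (∫⁻ p, ENNReal.ofReal (pZero3 p ^ S * g x p)) ^ ((M + 2) / (S + 2)))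
              ^ ((S + 2) / (M + 2))
          ≤ C * (∫⁻ x, ∫⁻ p, ENNReal.ofReal (pZero3 p ^ M * g x p))
              ^ ((S + 2) / (M + 2)) := by
  obtain ⟨C, hC, hCg⟩ :=
    exists_lintegral_pZero3_rpow_mul_le (k := 5 + δ) (by linarith) hS hSδ hSM C₀.toNNReal
  refine ⟨C, hC, fun g hg _ hgC₀ => ?_⟩
  have hS₂ : 0 < S + 2 := by linarith
  have hM₂ : 0 < M + 2 := by linarith
  have hsplit : ∀ (s : ℝ) x p, ENNReal.ofReal (pZero3 p ^ s * g x p)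
      = ENNReal.ofReal (pZero3 p ^ s) * ENNReal.ofReal (g x p) := fun s x p =>
    ENNReal.ofReal_mul (Real.rpow_nonneg (zero_le_one.trans (one_le_pZero3 p)) s)
  simp only [hsplit]
  refine rpow_lintegral_rpow_le_mul_rpow_lintegral ENNReal.coe_ne_top
    (div_pos hS₂ hM₂) (by field_simp) fun x =>
      hCg _ hg.of_uncurry_left.ennreal_ofReal fun p₁ p₂ => ?_
  calc ∫⁻ p₃, ENNReal.ofReal (g x (vec3 p₁ p₂ p₃)) * ENNReal.ofReal (√(1 + p₃ ^ 2) ^ (5 + δ))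
      = ∫⁻ p₃, ENNReal.ofReal (g x (vec3 p₁ p₂ p₃) * √(1 + p₃ ^ 2) ^ (5 + δ)) :=
        lintegral_congr fun p₃ => (ENNReal.ofReal_mul' (by positivity)).symm
    _ ≤ C₀.toNNReal := hgC₀ x p₁ p₂

/-- **Improved interpolation inequality in two-and-one-half dimensions**
(Proposition 7.6).  If `g : ℝ²_x × ℝ³_p → [0,∞)` is measurable with
`sup_{x,p₁,p₂} ∫ g ⟨p₃⟩^{5+δ} dp₃ ≤ C₀`, and `min{M, 5+δ} ≥ S > −2`, then there is
`C = C(C₀, S, M, δ)` with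
`‖p₀^S g‖_{L^{(M+2)/(S+2)}_x L¹_p} ≤ C ‖p₀^M g‖_{L¹_x L¹_p}^{(S+2)/(M+2)}`. -/
theorem improved_interpolation_2_5d (δ C₀ M S : ℝ) (hδ : 0 < δ) (hC₀ : 0 < C₀)
    (hSM : S ≤ M) (hSδ : S ≤ 5 + δ) (hS : -2 < S) :
    ∃ C : ℝ≥0, 0 < C ∧
      ∀ (g : EuclideanSpace ℝ (Fin 2) → EuclideanSpace ℝ (Fin 3) → ℝ),
        Measurable (Function.uncurry g) →
        (∀ x p, 0 ≤ g x p) →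
        (∀ (x : EuclideanSpace ℝ (Fin 2)) (p₁ p₂ : ℝ),
          (∫⁻ p₃ : ℝ, ENNReal.ofReal
              (g x (vec3 p₁ p₂ p₃) * Real.sqrt (1 + p₃ ^ 2) ^ (5 + δ)))
            ≤ ENNReal.ofReal C₀) →
        (∫⁻ x, (∫⁻ p, ENNReal.ofReal (pZero3 p ^ S * g x p)) ^ ((M + 2) / (S + 2)))
              ^ ((S + 2) / (M + 2))
          ≤ C * (∫⁻ x, ∫⁻ p, ENNReal.ofReal (pZero3 p ^ M * g x p))
              ^ ((S + 2) / (M + 2)) :=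
  improved_interpolation_2_5d_general δ C₀ M S hδ hSM hSδ hS
end

section
/- (Pointwise bounds on the Glassey–Schaeffer kernels of E_T and B_T in two-and-one-half dimensions.) There is an absolute constant C > 0 such that for all p = (p₁,p₂,p₃) ∈ ℝ³ and all ξ = (ξ₁,ξ₂) ∈ ℝ² with |ξ| ≤ 1, the following hold, where p̂·ξ = p̂₁ξ₁ + p̂₂ξ₂: (a) for i ∈ {1,2}, (1 − p̂₁² − p̂₂²) |ξ_i + p̂_i| / (1 + p̂·ξ)² ≤ C ⟨p₃⟩² / ( p_0 (1 + p̂·ξ) ); (b) |p̂₃| · |p̂₁(ξ₁+p̂₁) + p̂₂(ξ₂+p̂₂)| / (1 + p̂·ξ)² ≤ C ⟨p₃⟩³ / ( p_0 (1 + p̂·ξ) ); (c) |p̂₃| · |(1 + ξ₁p̂₁)(ξ₂+p̂₂) − ξ₂p̂₁(ξ₁+p̂₁)| / (1 + p̂·ξ)² ≤ C ⟨p₃⟩³ / ( p_0 (1 + p̂·ξ) ); (d) |(p̂₂ + ξ₂(p̂₁²+p̂₂²))(ξ₁+p̂₁) − (p̂₁ + ξ₁(p̂₁²+p̂₂²))(ξ₂+p̂₂)|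 / (1 + p̂·ξ)² ≤ C ⟨p₃⟩² / ( p_0 (1 + p̂·ξ) ). -/
private lemma kb_abs_le (x c : ℝ) (hc : 0 ≤ c) (h : x ^ 2 ≤ c ^ 2) : |x| ≤ c := by
  calc |x| = Real.sqrt (x ^ 2) := (Real.sqrt_sq_eq_abs x).symm
    _ ≤ Real.sqrt (c ^ 2) := Real.sqrt_le_sqrt h
    _ = c := Real.sqrt_sq hc

private lemma kb_main (ξ₁ ξ₂ q₁ q₂ q₃ P0 b : ℝ)
    (hξ : ξ₁ ^ 2 + ξ₂ ^ 2 ≤ 1) (hP0one : 1 ≤ P0) (hbone : 1 ≤ b)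
    (hA : (1 - q₁ ^ 2 - q₂ ^ 2) * P0 ^ 2 = b ^ 2)
    (hq3 : q₃ ^ 2 * P0 ^ 2 ≤ b ^ 2) :
    ((1 - q₁ ^ 2 - q₂ ^ 2) * |ξ₁ + q₁| / (1 + (q₁ * ξ₁ + q₂ * ξ₂)) ^ 2
        ≤ 4 * b ^ 2 / (P0 * (1 + (q₁ * ξ₁ + q₂ * ξ₂))))
    ∧ ((1 - q₁ ^ 2 - q₂ ^ 2) * |ξ₂ + q₂| / (1 + (q₁ * ξ₁ + q₂ * ξ₂)) ^ 2
        ≤ 4 * b ^ 2 / (P0 * (1 + (q₁ * ξ₁ + q₂ * ξ₂))))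
    ∧ (|q₃| * |q₁ * (ξ₁ + q₁) + q₂ * (ξ₂ + q₂)| / (1 + (q₁ * ξ₁ + q₂ * ξ₂)) ^ 2
        ≤ 4 * b ^ 3 / (P0 * (1 + (q₁ * ξ₁ + q₂ * ξ₂))))
    ∧ (|q₃| * |(1 + ξ₁ * q₁) * (ξ₂ + q₂) - ξ₂ * q₁ * (ξ₁ + q₁)|
          / (1 + (q₁ * ξ₁ + q₂ * ξ₂)) ^ 2
        ≤ 4 * b ^ 3 / (P0 * (1 + (q₁ * ξ₁ + q₂ * ξ₂))))
    ∧ (|(q₂ + ξ₂ * (q₁ ^ 2 + q₂ ^ 2)) * (ξ₁ + q₁)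
          - (q₁ + ξ₁ * (q₁ ^ 2 + q₂ ^ 2)) * (ξ₂ + q₂)|
          / (1 + (q₁ * ξ₁ + q₂ * ξ₂)) ^ 2
        ≤ 4 * b ^ 2 / (P0 * (1 + (q₁ * ξ₁ + q₂ * ξ₂)))) := by
  have hP0nn : 0 ≤ P0 := by linarith
  have hP0pos : 0 < P0 := by linarith
  have hbnn : 0 ≤ b := by linarith
  have h1q : 0 < 1 - q₁ ^ 2 - q₂ ^ 2 := by nlinarith [sq_nonneg P0, sq_nonneg b]
  have hqle : q₁ ^ 2 + q₂ ^ 2 ≤ 1 := by linarith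
  set u : ℝ := 1 + (q₁ * ξ₁ + q₂ * ξ₂) with hu_def
  have hkey : 2 * u = (1 - q₁ ^ 2 - q₂ ^ 2) + ((ξ₁ + q₁) ^ 2 + (ξ₂ + q₂) ^ 2)
      + (1 - (ξ₁ ^ 2 + ξ₂ ^ 2)) := by rw [hu_def]; ring
  have hu0 : 0 < u := by
    linarith [hkey, sq_nonneg (ξ₁ + q₁), sq_nonneg (ξ₂ + q₂)]
  have hsum : (ξ₁ + q₁) ^ 2 + (ξ₂ + q₂) ^ 2 ≤ 2 * u := by
    linarith [hkey, sq_nonneg (ξ₁ + q₁), sq_nonneg (ξ₂ + q₂)]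
  have h1q2 : 1 - q₁ ^ 2 - q₂ ^ 2 ≤ 2 * u := by
    linarith [hkey, sq_nonneg (ξ₁ + q₁), sq_nonneg (ξ₂ + q₂)]
  have hb2u : b ^ 2 ≤ 2 * u * P0 ^ 2 := by
    calc b ^ 2 = (1 - q₁ ^ 2 - q₂ ^ 2) * P0 ^ 2 := hA.symm
      _ ≤ 2 * u * P0 ^ 2 := mul_le_mul_of_nonneg_right h1q2 (sq_nonneg P0)
  -- helper: if x^2 ≤ 2u then |x| ≤ 2 P0 u
  have hL : ∀ x : ℝ, x ^ 2 ≤ 2 * u → |x| ≤ 2 * P0 * u := by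
    intro x hx
    refine kb_abs_le x _ (by positivity) ?_
    have h2 : (1:ℝ) ≤ 2 * u * P0 ^ 2 := by nlinarith
    nlinarith
  have hL1 : |ξ₁ + q₁| ≤ 2 * P0 * u := hL _ (by linarith [hsum, sq_nonneg (ξ₂ + q₂)])
  have hL2 : |ξ₂ + q₂| ≤ 2 * P0 * u := hL _ (by linarith [hsum, sq_nonneg (ξ₁ + q₁)])
  have hq3b : |q₃| * P0 ≤ b := by
    have h := kb_abs_le (q₃ * P0) b hbnn (by rw [mul_pow]; exact hq3)
    rwa [abs_mul, abs_of_nonneg hP0nn] at h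
  have hq2le : |q₂| ≤ 1 :=
    kb_abs_le q₂ 1 one_pos.le (by rw [one_pow]; linarith [sq_nonneg q₁])
  have hxi2le : |ξ₂| ≤ 1 :=
    kb_abs_le ξ₂ 1 one_pos.le (by rw [one_pow]; linarith [sq_nonneg ξ₁])
  have hAu : (1 - q₁ ^ 2 - q₂ ^ 2) * P0 ^ 2 * u ^ 2 = b ^ 2 * u ^ 2 := by rw [hA]
  have hb3 : 0 ≤ (b ^ 3 - b) * u ^ 2 :=
    mul_nonneg (by nlinarith) (sq_nonneg u)
  have hq2u : b * u * (1 - q₁ ^ 2 - q₂ ^ 2) ≤ b * u * (2 * u) :=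
    mul_le_mul_of_nonneg_left h1q2 (mul_nonneg hbnn hu0.le)
  have hupos : (0:ℝ) < u ^ 2 := pow_pos hu0 2
  have hPu : (0:ℝ) < P0 * u := mul_pos hP0pos hu0
  refine ⟨?_, ?_, ?_, ?_, ?_⟩
  · rw [div_le_div_iff₀ hupos hPu]
    linarith [mul_le_mul_of_nonneg_right hL1
        (le_of_lt (mul_pos (mul_pos h1q hP0pos) hu0)), hAu, sq_nonneg (b * u)]
  · rw [div_le_div_iff₀ hupos hPu]
    linarith [mul_le_mul_of_nonneg_right hL2
        (le_of_lt (mul_pos (mul_pos h1q hP0pos) hu0)), hAu, sq_nonneg (b * u)]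
  · rw [div_le_div_iff₀ hupos hPu]
    have hin : |q₁ * (ξ₁ + q₁) + q₂ * (ξ₂ + q₂)| ≤ u + (1 - q₁ ^ 2 - q₂ ^ 2) := by
      have heq : q₁ * (ξ₁ + q₁) + q₂ * (ξ₂ + q₂) = u - (1 - q₁ ^ 2 - q₂ ^ 2) := by
        rw [hu_def]; ring
      rw [heq, abs_le]; constructor <;> linarith
    have h1 : |q₃| * |q₁ * (ξ₁ + q₁) + q₂ * (ξ₂ + q₂)| * (P0 * u)
        ≤ b * ((u + (1 - q₁ ^ 2 - q₂ ^ 2)) * u) := by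
      calc |q₃| * |q₁ * (ξ₁ + q₁) + q₂ * (ξ₂ + q₂)| * (P0 * u)
          = (|q₃| * P0) * |q₁ * (ξ₁ + q₁) + q₂ * (ξ₂ + q₂)| * u := by ring
        _ ≤ b * (u + (1 - q₁ ^ 2 - q₂ ^ 2)) * u :=
            mul_le_mul_of_nonneg_right
              (mul_le_mul hq3b hin (abs_nonneg _) hbnn) hu0.le
        _ = b * ((u + (1 - q₁ ^ 2 - q₂ ^ 2)) * u) := by ring
    linarith [h1, hb3, hq2u, mul_nonneg hbnn (sq_nonneg u)]
  · rw [div_le_div_iff₀ hupos hPu]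
    have hin : |(1 + ξ₁ * q₁) * (ξ₂ + q₂) - ξ₂ * q₁ * (ξ₁ + q₁)|
        ≤ u + (1 - q₁ ^ 2 - q₂ ^ 2) := by
      have heq : (1 + ξ₁ * q₁) * (ξ₂ + q₂) - ξ₂ * q₁ * (ξ₁ + q₁)
          = q₂ * u + ξ₂ * (1 - q₁ ^ 2 - q₂ ^ 2) := by rw [hu_def]; ring
      rw [heq]
      calc |q₂ * u + ξ₂ * (1 - q₁ ^ 2 - q₂ ^ 2)|
          ≤ |q₂ * u| + |ξ₂ * (1 - q₁ ^ 2 - q₂ ^ 2)| := abs_add_le _ _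
        _ = |q₂| * u + |ξ₂| * (1 - q₁ ^ 2 - q₂ ^ 2) := by
            rw [abs_mul, abs_mul, abs_of_pos hu0, abs_of_pos h1q]
        _ ≤ 1 * u + 1 * (1 - q₁ ^ 2 - q₂ ^ 2) := by gcongr
        _ = u + (1 - q₁ ^ 2 - q₂ ^ 2) := by ring
    have h1 : |q₃| * |(1 + ξ₁ * q₁) * (ξ₂ + q₂) - ξ₂ * q₁ * (ξ₁ + q₁)| * (P0 * u)
        ≤ b * ((u + (1 - q₁ ^ 2 - q₂ ^ 2)) * u) := by
      calc |q₃| * |(1 + ξ₁ * q₁) * (ξ₂ + q₂) - ξ₂ * q₁ * (ξ₁ + q₁)| * (P0 * u)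
          = (|q₃| * P0) * |(1 + ξ₁ * q₁) * (ξ₂ + q₂) - ξ₂ * q₁ * (ξ₁ + q₁)| * u := by
            ring
        _ ≤ b * (u + (1 - q₁ ^ 2 - q₂ ^ 2)) * u :=
            mul_le_mul_of_nonneg_right
              (mul_le_mul hq3b hin (abs_nonneg _) hbnn) hu0.le
        _ = b * ((u + (1 - q₁ ^ 2 - q₂ ^ 2)) * u) := by ring
    linarith [h1, hb3, hq2u, mul_nonneg hbnn (sq_nonneg u)]
  · rw [div_le_div_iff₀ hupos hPu]
    have hX : |q₂ * (ξ₁ + q₁) - q₁ * (ξ₂ + q₂)| ≤ 2 * P0 * u := by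
      apply hL
      have e1 : (q₂ * (ξ₁ + q₁) - q₁ * (ξ₂ + q₂)) ^ 2
          + (q₁ * (ξ₁ + q₁) + q₂ * (ξ₂ + q₂)) ^ 2
          = (q₁ ^ 2 + q₂ ^ 2) * ((ξ₁ + q₁) ^ 2 + (ξ₂ + q₂) ^ 2) := by ring
      have e2 : (q₁ ^ 2 + q₂ ^ 2) * ((ξ₁ + q₁) ^ 2 + (ξ₂ + q₂) ^ 2)
          ≤ 1 * ((ξ₁ + q₁) ^ 2 + (ξ₂ + q₂) ^ 2) :=
        mul_le_mul_of_nonneg_right hqle (by positivity)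
      linarith [e1, e2, sq_nonneg (q₁ * (ξ₁ + q₁) + q₂ * (ξ₂ + q₂)), hsum]
    have heq : (q₂ + ξ₂ * (q₁ ^ 2 + q₂ ^ 2)) * (ξ₁ + q₁)
        - (q₁ + ξ₁ * (q₁ ^ 2 + q₂ ^ 2)) * (ξ₂ + q₂)
        = (q₂ * (ξ₁ + q₁) - q₁ * (ξ₂ + q₂)) * (1 - q₁ ^ 2 - q₂ ^ 2) := by ring
    rw [heq, abs_mul, abs_of_pos h1q]
    linarith [mul_le_mul_of_nonneg_right hX
        (le_of_lt (mul_pos (mul_pos h1q hP0pos) hu0)), hAu, sq_nonneg (b * u)]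

/-- **Pointwise bounds on the Glassey–Schaeffer kernels of `E_T` and `B_T` in
two-and-one-half dimensions.**  There is an absolute constant `C > 0` such that for all
`p = (p₁,p₂,p₃) ∈ ℝ³` and `ξ = (ξ₁,ξ₂) ∈ ℝ²` with `|ξ| ≤ 1`, writing
`p₀ = √(1+|p|²)`, `p̂ᵢ = pᵢ/p₀`, `p̂·ξ = p̂₁ξ₁ + p̂₂ξ₂` and `⟨p₃⟩ = √(1+p₃²)`, the four
kernel bounds (a)–(d) hold. -/
theorem kernel_bounds_2_5d :
    ∃ C : ℝ, 0 < C ∧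
      ∀ p₁ p₂ p₃ ξ₁ ξ₂ : ℝ, ξ₁ ^ 2 + ξ₂ ^ 2 ≤ 1 →
      ∀ P0 q₁ q₂ q₃ d b : ℝ,
        P0 = Real.sqrt (1 + p₁ ^ 2 + p₂ ^ 2 + p₃ ^ 2) →
        q₁ = p₁ / P0 → q₂ = p₂ / P0 → q₃ = p₃ / P0 →
        d = q₁ * ξ₁ + q₂ * ξ₂ →
        b = Real.sqrt (1 + p₃ ^ 2) →
        -- (a), for i = 1 and i = 2:
        ((1 - q₁ ^ 2 - q₂ ^ 2) * |ξ₁ + q₁| / (1 + d) ^ 2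
            ≤ C * b ^ 2 / (P0 * (1 + d)))
        ∧ ((1 - q₁ ^ 2 - q₂ ^ 2) * |ξ₂ + q₂| / (1 + d) ^ 2
            ≤ C * b ^ 2 / (P0 * (1 + d)))
        -- (b):
        ∧ (|q₃| * |q₁ * (ξ₁ + q₁) + q₂ * (ξ₂ + q₂)| / (1 + d) ^ 2
            ≤ C * b ^ 3 / (P0 * (1 + d)))
        -- (c):
        ∧ (|q₃| * |(1 + ξ₁ * q₁) * (ξ₂ + q₂) - ξ₂ * q₁ * (ξ₁ + q₁)| / (1 + d) ^ 2
            ≤ C * b ^ 3 / (P0 * (1 + d)))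
        -- (d):
        ∧ (|(q₂ + ξ₂ * (q₁ ^ 2 + q₂ ^ 2)) * (ξ₁ + q₁)
              - (q₁ + ξ₁ * (q₁ ^ 2 + q₂ ^ 2)) * (ξ₂ + q₂)| / (1 + d) ^ 2
            ≤ C * b ^ 2 / (P0 * (1 + d))) := by
  refine ⟨4, by norm_num, ?_⟩
  intro p₁ p₂ p₃ ξ₁ ξ₂ hξ P0 q₁ q₂ q₃ d b hP0e hq1e hq2e hq3e hde hbe
  subst hde
  have hP0sq : P0 ^ 2 = 1 + p₁ ^ 2 + p₂ ^ 2 + p₃ ^ 2 := by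
    rw [hP0e, Real.sq_sqrt (by positivity)]
  have hP0one : 1 ≤ P0 := by
    rw [hP0e]
    calc (1:ℝ) = Real.sqrt 1 := Real.sqrt_one.symm
      _ ≤ _ := Real.sqrt_le_sqrt
          (by linarith [sq_nonneg p₁, sq_nonneg p₂, sq_nonneg p₃])
  have hP0pos : 0 < P0 := lt_of_lt_of_le one_pos hP0one
  have hbsq : b ^ 2 = 1 + p₃ ^ 2 := by rw [hbe, Real.sq_sqrt (by positivity)]
  have hbone : 1 ≤ b := by
    rw [hbe]
    calc (1:ℝ) = Real.sqrt 1 := Real.sqrt_one.symm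
      _ ≤ _ := Real.sqrt_le_sqrt (by linarith [sq_nonneg p₃])
  have hq1sq : q₁ ^ 2 * P0 ^ 2 = p₁ ^ 2 := by rw [hq1e]; field_simp
  have hq2sq : q₂ ^ 2 * P0 ^ 2 = p₂ ^ 2 := by rw [hq2e]; field_simp
  have hq3sq : q₃ ^ 2 * P0 ^ 2 = p₃ ^ 2 := by rw [hq3e]; field_simp
  have hA : (1 - q₁ ^ 2 - q₂ ^ 2) * P0 ^ 2 = b ^ 2 := by
    linear_combination hP0sq - hq1sq - hq2sq - hbsq
  have hq3b : q₃ ^ 2 * P0 ^ 2 ≤ b ^ 2 := by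
    rw [hq3sq, hbsq]; linarith
  exact kb_main ξ₁ ξ₂ q₁ q₂ q₃ P0 b hξ hP0one hbone hA hq3b
end
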